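/- arXiv:2011.06549 — 12 statements merged into one kernel-verified Lean document; each statement's English description precedes it below -/
import Mathlib

section
/- Let (P, ≤) be a finite partially ordered set, f : P → ℝ, and g its zeta transform. Let T ⊆ P be sup-closed with supp(f) ⊆ T. Then for every y ∈ T one has f(y) = Σ_{s ∈ T, s ≤ y} g(s) · μ_T(s, y), where μ_T is the Möbius function of T with the order induced from P; moreover f(y) = 0 for every y ∈ P \ T. -/
/-!
Because `f` vanishes off `T`, the restriction of `g` to `T` is the zeta transform of `f` taken
inside the subposet `T`, so Möbius inversion in `T` recovers `f`.
-/

open Classical Finset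

/-- `μ` satisfies, on the subposet `T`, the recursion characterising the Möbius function `μ_T`. -/
def IsMobiusFunctionOn {P : Type*} [PartialOrder P] [Fintype P] (T : Set P) (μ : P → P → ℤ) :
    Prop :=
  (∀ s ∈ T, μ s s = 1) ∧
    ∀ s ∈ T, ∀ y ∈ T, s < y → ∑ z ∈ univ.filter (fun z => z ∈ T ∧ s ≤ z ∧ z ≤ y), μ z y = 0

namespace IsMobiusFunctionOn

variable {P R : Type*} [PartialOrder P] [Fintype P] [Ring R] {T : Set P} {μ : P → P → ℤ}

theorem sum_Icc_eq_ite (hμ : IsMobiusFunctionOn T μ) {x y : P} (hx : x ∈ T) (hy : y ∈ T)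
    (hxy : x ≤ y) :
    ∑ z ∈ univ.filter (fun z => z ∈ T ∧ x ≤ z ∧ z ≤ y), μ z y = if x = y then 1 else 0 := by
  rcases hxy.eq_or_lt with rfl | hlt
  · have hsingleton : univ.filter (fun z => z ∈ T ∧ x ≤ z ∧ z ≤ x) = {x} := by
      ext z
      simp only [mem_filter, mem_univ, true_and, mem_singleton]
      exact ⟨fun ⟨_, hxz, hzx⟩ => le_antisymm hzx hxz, by rintro rfl; exact ⟨hx, le_rfl, le_rfl⟩⟩
    rw [hsingleton, sum_singleton, hμ.1 x hx, if_pos rfl]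
  · rw [hμ.2 x hx y hy hlt, if_neg hlt.ne]

theorem sum_zeta_mul_eq (hμ : IsMobiusFunctionOn T μ) (h : P → R) {y : P} (hy : y ∈ T) :
    ∑ s ∈ univ.filter (fun s => s ∈ T ∧ s ≤ y),
      (∑ x ∈ univ.filter (fun x => x ∈ T ∧ x ≤ s), h x) * (μ s y : R) = h y := by
  calc _ = ∑ s ∈ univ.filter (fun s => s ∈ T ∧ s ≤ y),
          ∑ x ∈ univ.filter (fun x => x ∈ T ∧ x ≤ s), h x * (μ s y : R) := by
        simp_rw [sum_mul]
    _ = ∑ x ∈ univ.filter (fun x => x ∈ T ∧ x ≤ y),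
          ∑ s ∈ univ.filter (fun s => s ∈ T ∧ x ≤ s ∧ s ≤ y), h x * (μ s y : R) := by
        refine sum_comm' fun s x => ?_
        simp only [mem_filter, mem_univ, true_and]
        exact ⟨fun ⟨⟨hs, hsy⟩, hx, hxs⟩ => ⟨⟨hs, hxs, hsy⟩, hx, hxs.trans hsy⟩,
          fun ⟨⟨hs, hxs, hsy⟩, hx, _⟩ => ⟨⟨hs, hsy⟩, hx, hxs⟩⟩
    _ = ∑ x ∈ univ.filter (fun x => x ∈ T ∧ x ≤ y), h x * if x = y then 1 else 0 := by
        refine sum_congr rfl fun x hx => ?_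
        rw [mem_filter] at hx
        rw [← mul_sum, ← Int.cast_sum, hμ.sum_Icc_eq_ite hx.2.1 hy hx.2.2]
        split_ifs <;> simp
    _ = h y := by simp [hy]

end IsMobiusFunctionOn

theorem sum_filter_le_eq_sum_filter_mem_le {P M : Type*} [PartialOrder P] [Fintype P]
    [AddCommMonoid M] {T : Set P} {f : P → M} (hsupp : ∀ x, f x ≠ 0 → x ∈ T) (s : P) :
    ∑ x ∈ univ.filter (fun x => x ≤ s), f x = ∑ x ∈ univ.filter (fun x => x ∈ T ∧ x ≤ s), f x := by
  rw [← sum_filter_of_ne fun x _ hx => hsupp x hx, filter_filter]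
  simp_rw [and_comm]

theorem stmt_0_general {P : Type*} [PartialOrder P] [Fintype P]
    (f g : P → ℝ)
    (hg : ∀ y : P, g y = ∑ x ∈ Finset.univ.filter (fun x => x ≤ y), f x)
    (T : Set P)
    (hsupp : ∀ x : P, f x ≠ 0 → x ∈ T)
    (μ : P → P → ℤ)
    (hμ₁ : ∀ s ∈ T, μ s s = 1)
    (hμ₂ : ∀ s ∈ T, ∀ y ∈ T, s < y →
      ∑ z ∈ Finset.univ.filter (fun z => z ∈ T ∧ s ≤ z ∧ z ≤ y), μ z y = 0) :
    (∀ y ∈ T, f y = ∑ s ∈ Finset.univ.filter (fun s => s ∈ T ∧ s ≤ y), g s * (μ s y : ℝ))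
    ∧ ∀ y : P, y ∉ T → f y = 0 := by
  refine ⟨fun y hy => ?_, fun y => not_imp_comm.1 (hsupp y)⟩
  simp_rw [hg, sum_filter_le_eq_sum_filter_mem_le hsupp]
  exact (IsMobiusFunctionOn.sum_zeta_mul_eq ⟨hμ₁, hμ₂⟩ f hy).symm

/-- **Efficient Möbius inversion formula** (additive form).
If `T` is a sup-closed subset of a finite poset `P` containing the support of `f`,
and `g` is the zeta transform of `f`, then on `T` the Möbius transform of `g`
computed inside `T` recovers `f`, and `f` vanishes outside `T`. -/
theorem stmt_0 {P : Type*} [PartialOrder P] [Fintype P]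
    (f g : P → ℝ)
    (hg : ∀ y : P, g y = ∑ x ∈ Finset.univ.filter (fun x => x ≤ y), f x)
    (T : Set P)
    (hT : ∀ F : Set P, F ⊆ T → F.Nonempty → ∃ s ∈ T, IsLUB F s)
    (hsupp : ∀ x : P, f x ≠ 0 → x ∈ T)
    (μ : P → P → ℤ)
    (hμ₁ : ∀ s ∈ T, μ s s = 1)
    (hμ₂ : ∀ s ∈ T, ∀ y ∈ T, s < y →
      ∑ z ∈ Finset.univ.filter (fun z => z ∈ T ∧ s ≤ z ∧ z ≤ y), μ z y = 0) :
    (∀ y ∈ T, f y = ∑ s ∈ Finset.univ.filter (fun s => s ∈ T ∧ s ≤ y), g s * (μ s y : ℝ))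
    ∧ ∀ y : P, y ∉ T → f y = 0 :=
  stmt_0_general f g hg T hsupp μ hμ₁ hμ₂
end

section
/- Let (P, ≤) be a finite partially ordered set, h : P → ℝ with h(x) ≠ 0 for all x ∈ P, and let G(y) = Π_{x ≤ y} h(x). Let T ⊆ P be sup-closed with {x ∈ P : h(x) ≠ 1} ⊆ T. Then for every y ∈ T one has h(y) = Π_{s ∈ T, s ≤ y} G(s)^{μ_T(s, y)} (integer exponents, where μ_T is the Möbius function of T with the order induced from P), and h(y) = 1 for every y ∈ P \ T. -/
open Classical

/-!
Only the elements of `T` contribute to `G`, so `G y = ∏_{x ∈ T, x ≤ y} h x`. Substituting this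
into `∏_{s ∈ T, s ≤ y} G s ^ μ s y` and exchanging the two products gives
`∏_{x ∈ T, x ≤ y} h x ^ (∑_{s ∈ T, x ≤ s ≤ y} μ s y)`, and the defining recursion of the Möbius
function makes the exponent `1` for `x = y` and `0` otherwise.
-/

open Finset

theorem zpow_sum₀ {ι M : Type*} [CommGroupWithZero M] {a : M} (ha : a ≠ 0) (s : Finset ι) (f : ι → ℤ) :
    a ^ (∑ i ∈ s, f i) = ∏ i ∈ s, a ^ f i := by
  induction s using Finset.induction_on with
  | empty => simp
  | insert i s hi ih => rw [prod_insert hi, sum_insert hi, zpow_add₀ ha, ih]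

section MoebiusInversion

variable {P : Type*} [PartialOrder P] [Fintype P]

theorem prod_prod_filter_le_comm {M : Type*} [CommMonoid M] (T : Set P) (y : P) (f : P → P → M) :
    ∏ s ∈ univ.filter (fun s => s ∈ T ∧ s ≤ y), ∏ x ∈ univ.filter (fun x => x ∈ T ∧ x ≤ s), f s x =
      ∏ x ∈ univ.filter (fun x => x ∈ T ∧ x ≤ y),
        ∏ s ∈ univ.filter (fun s => s ∈ T ∧ x ≤ s ∧ s ≤ y), f s x := by
  refine prod_comm' fun s x => ?_
  simp only [mem_filter, mem_univ, true_and]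
  exact ⟨fun ⟨⟨hs, hsy⟩, hx, hxs⟩ => ⟨⟨hs, hxs, hsy⟩, hx, hxs.trans hsy⟩,
    fun ⟨⟨hs, hxs, hsy⟩, hx, _⟩ => ⟨⟨hs, hsy⟩, hx, hxs⟩⟩

theorem sum_moebius_interval_eq_ite (T : Set P) (μ : P → P → ℤ)
    (hμ₁ : ∀ s ∈ T, μ s s = 1)
    (hμ₂ : ∀ s ∈ T, ∀ y ∈ T, s < y →
      ∑ z ∈ univ.filter (fun z => z ∈ T ∧ s ≤ z ∧ z ≤ y), μ z y = 0)
    {x y : P} (hx : x ∈ T) (hy : y ∈ T) (hxy : x ≤ y) :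
    ∑ s ∈ univ.filter (fun s => s ∈ T ∧ x ≤ s ∧ s ≤ y), μ s y = if x = y then 1 else 0 := by
  split_ifs with hxy'
  · subst hxy'
    have hsingle : univ.filter (fun s => s ∈ T ∧ x ≤ s ∧ s ≤ x) = {x} := by
      ext s
      simp only [mem_filter, mem_univ, true_and, mem_singleton]
      exact ⟨fun ⟨_, hxs, hsx⟩ => le_antisymm hsx hxs, by rintro rfl; exact ⟨hx, le_rfl, le_rfl⟩⟩
    rw [hsingle, sum_singleton, hμ₁ x hx]
  · exact hμ₂ x hx y hy (lt_of_le_of_ne hxy hxy')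

theorem prod_zpow_moebius {M : Type*} [CommGroupWithZero M] (T : Set P) (h : P → M)
    (hne : ∀ x, h x ≠ 0) (μ : P → P → ℤ)
    (hμ₁ : ∀ s ∈ T, μ s s = 1)
    (hμ₂ : ∀ s ∈ T, ∀ y ∈ T, s < y →
      ∑ z ∈ univ.filter (fun z => z ∈ T ∧ s ≤ z ∧ z ≤ y), μ z y = 0)
    {y : P} (hy : y ∈ T) :
    ∏ s ∈ univ.filter (fun s => s ∈ T ∧ s ≤ y),
      (∏ x ∈ univ.filter (fun x => x ∈ T ∧ x ≤ s), h x) ^ μ s y = h y := by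
  calc ∏ s ∈ univ.filter (fun s => s ∈ T ∧ s ≤ y),
        (∏ x ∈ univ.filter (fun x => x ∈ T ∧ x ≤ s), h x) ^ μ s y
      = ∏ x ∈ univ.filter (fun x => x ∈ T ∧ x ≤ y),
          ∏ s ∈ univ.filter (fun s => s ∈ T ∧ x ≤ s ∧ s ≤ y), h x ^ μ s y := by
        simp_rw [← prod_zpow]
        exact prod_prod_filter_le_comm T y fun s x => h x ^ μ s y
    _ = ∏ x ∈ univ.filter (fun x => x ∈ T ∧ x ≤ y), h x ^ (if x = y then 1 else 0 : ℤ) := by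
        refine prod_congr rfl fun x hx => ?_
        rw [mem_filter] at hx
        rw [← sum_moebius_interval_eq_ite T μ hμ₁ hμ₂ hx.2.1 hy hx.2.2, zpow_sum₀ (hne x)]
    _ = h y := by
        rw [prod_eq_single_of_mem y (by simpa using hy) fun x _ hxy => by rw [if_neg hxy, zpow_zero],
          if_pos rfl, zpow_one]

theorem prod_filter_le_eq_of_mulSupport_subset {M : Type*} [CommMonoid M] (T : Set P) (h : P → M)
    (hsupp : ∀ x, h x ≠ 1 → x ∈ T) (y : P) :
    ∏ x ∈ univ.filter (fun x => x ≤ y), h x = ∏ x ∈ univ.filter (fun x => x ∈ T ∧ x ≤ y), h x := by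
  refine (prod_subset (fun x hx => ?_) fun x hx hxT => ?_).symm
  · simp only [mem_filter, mem_univ, true_and] at hx ⊢
    exact hx.2
  · simp only [mem_filter, mem_univ, true_and] at hx hxT
    exact not_imp_comm.mp (hsupp x) fun hx' => hxT ⟨hx', hx⟩

end MoebiusInversion

theorem stmt_1_general {P : Type*} [PartialOrder P] [Fintype P]
    (h G : P → ℝ)
    (hne : ∀ x : P, h x ≠ 0)
    (hG : ∀ y : P, G y = ∏ x ∈ Finset.univ.filter (fun x => x ≤ y), h x)
    (T : Set P)
    (hsupp : ∀ x : P, h x ≠ 1 → x ∈ T)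
    (μ : P → P → ℤ)
    (hμ₁ : ∀ s ∈ T, μ s s = 1)
    (hμ₂ : ∀ s ∈ T, ∀ y ∈ T, s < y →
      ∑ z ∈ Finset.univ.filter (fun z => z ∈ T ∧ s ≤ z ∧ z ≤ y), μ z y = 0) :
    (∀ y ∈ T, h y = ∏ s ∈ Finset.univ.filter (fun s => s ∈ T ∧ s ≤ y), G s ^ (μ s y))
    ∧ ∀ y : P, y ∉ T → h y = 1 := by
  refine ⟨fun y hy => ?_, fun y hy => not_imp_comm.mp (hsupp y) hy⟩
  simp_rw [hG, prod_filter_le_eq_of_mulSupport_subset T h hsupp]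
  exact (prod_zpow_moebius T h hne μ hμ₁ hμ₂ hy).symm

/-- **Efficient Möbius inversion formula** (multiplicative form). -/
theorem stmt_1 {P : Type*} [PartialOrder P] [Fintype P]
    (h G : P → ℝ)
    (hne : ∀ x : P, h x ≠ 0)
    (hG : ∀ y : P, G y = ∏ x ∈ Finset.univ.filter (fun x => x ≤ y), h x)
    (T : Set P)
    (hT : ∀ F : Set P, F ⊆ T → F.Nonempty → ∃ s ∈ T, IsLUB F s)
    (hsupp : ∀ x : P, h x ≠ 1 → x ∈ T)
    (μ : P → P → ℤ)
    (hμ₁ : ∀ s ∈ T, μ s s = 1)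
    (hμ₂ : ∀ s ∈ T, ∀ y ∈ T, s < y →
      ∑ z ∈ Finset.univ.filter (fun z => z ∈ T ∧ s ≤ z ∧ z ≤ y), μ z y = 0) :
    (∀ y ∈ T, h y = ∏ s ∈ Finset.univ.filter (fun s => s ∈ T ∧ s ≤ y), G s ^ (μ s y))
    ∧ ∀ y : P, y ∉ T → h y = 1 :=
  stmt_1_general h G hne hG T hsupp μ hμ₁ hμ₂
end

section
/- Let (P, ≤) be a finite partially ordered set and T ⊆ P a sup-closed subset. For s ∈ T and y ∈ P define η(s, y) = Σ_{z ∈ P : z ≤ y and s is the greatest element of {t ∈ T : t ≤ z}} μ_P(z, y). Then η(s, s) = 1 for every s ∈ T, and for every s ∈ T and y ∈ P with s < y one has η(s, y) = − Σ_{p ∈ T, s < p ≤ y} η(p, y). -/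
/-!
For `s ∈ T` and `s ≤ z`, the set `T ∩ Iic z` is nonempty, so sup-closedness gives it a greatest
element `g z`, and `s ≤ g z`. Hence the points of `[s, y]` split into the fibres of `g` over
`T ∩ [s, y]`, and `η p y` is exactly the sum of `μ (·) y` over the fibre of `p`. Summing over all
fibres gives `∑ z ∈ [s, y], μ z y = 0`, and separating the term `p = s` yields the recursion.
-/

open Classical Finset

section SupClosed

variable {P : Type*} [PartialOrder P] {T : Set P}

theorem isGreatest_inter_Iic_iff {s z : P} :
    IsGreatest (T ∩ Set.Iic z) s ↔ s ∈ T ∧ s ≤ z ∧ ∀ t ∈ T, t ≤ z → t ≤ s := by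
  simp only [IsGreatest, upperBounds, Set.mem_inter_iff, Set.mem_Iic, Set.mem_ofPred_eq, and_imp,
    and_assoc]

/-- The least upper bound of `T ∩ Iic z` lies below `z`, hence in `T ∩ Iic z` itself. -/
theorem exists_isGreatest_inter_Iic
    (hT : ∀ F : Set P, F ⊆ T → F.Nonempty → ∃ s ∈ T, IsLUB F s) {z : P}
    (hz : (T ∩ Set.Iic z).Nonempty) : ∃ p, IsGreatest (T ∩ Set.Iic z) p := by
  obtain ⟨p, hpT, hp⟩ := hT _ Set.inter_subset_left hz
  exact ⟨p, ⟨hpT, hp.2 fun _ ht => ht.2⟩, hp.1⟩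

variable [Fintype P] {M : Type*} [AddCommMonoid M]

theorem sum_filter_isGreatest_inter_Iic_self {s : P} (hs : s ∈ T) (f : P → M) :
    ∑ z ∈ univ.filter (fun z => z ≤ s ∧ IsGreatest (T ∩ Set.Iic z) s), f z = f s := by
  have hss : IsGreatest (T ∩ Set.Iic s) s := ⟨⟨hs, le_rfl⟩, fun _ ht => ht.2⟩
  rw [sum_eq_single_of_mem s (by simpa using hss)]
  rintro z hz hzs
  obtain ⟨hzs', ⟨-, hsz⟩, -⟩ := (mem_filter.1 hz).2
  exact absurd (le_antisymm hzs' hsz) hzs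

theorem sum_filter_mem_le_eq_add_sum_filter_mem_lt {s y : P} (hs : s ∈ T) (hsy : s ≤ y)
    (f : P → M) :
    ∑ p ∈ univ.filter (fun p => p ∈ T ∧ s ≤ p ∧ p ≤ y), f p =
      f s + ∑ p ∈ univ.filter (fun p => p ∈ T ∧ s < p ∧ p ≤ y), f p := by
  rw [← sum_insert (by simp)]
  congr 1
  ext p
  simp only [mem_filter, mem_univ, true_and, mem_insert]
  constructor
  · rintro ⟨hp, hsp, hpy⟩
    exact hsp.eq_or_lt.imp Eq.symm fun hsp => ⟨hp, hsp, hpy⟩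
  · rintro (rfl | ⟨hp, hsp, hpy⟩)
    exacts [⟨hs, le_rfl, hsy⟩, ⟨hp, hsp.le, hpy⟩]

theorem sum_sum_filter_isGreatest_inter_Iic
    (hT : ∀ F : Set P, F ⊆ T → F.Nonempty → ∃ s ∈ T, IsLUB F s) {s y : P} (hs : s ∈ T)
    (f : P → M) :
    ∑ p ∈ univ.filter (fun p => p ∈ T ∧ s ≤ p ∧ p ≤ y),
      ∑ z ∈ univ.filter (fun z => z ≤ y ∧ IsGreatest (T ∩ Set.Iic z) p), f z =
    ∑ z ∈ univ.filter (fun z => s ≤ z ∧ z ≤ y), f z := by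
  rw [sum_comm' (t' := univ.filter (fun z => s ≤ z ∧ z ≤ y))
    (s' := fun z => univ.filter (fun p => IsGreatest (T ∩ Set.Iic z) p))]
  · refine sum_congr rfl fun z hz => ?_
    obtain ⟨hsz, -⟩ := (mem_filter.1 hz).2
    obtain ⟨p, hp⟩ := exists_isGreatest_inter_Iic hT ⟨s, hs, hsz⟩
    have : univ.filter (fun q => IsGreatest (T ∩ Set.Iic z) q) = {p} := by
      ext q
      simpa using ⟨fun hq => hq.unique hp, fun h => h ▸ hp⟩
    rw [this, sum_singleton]
  · intro p z
    simp only [mem_filter, mem_univ, true_and]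
    constructor
    · rintro ⟨⟨-, hsp, -⟩, hzy, hp⟩
      exact ⟨hp, hsp.trans hp.1.2, hzy⟩
    · rintro ⟨hp, hsz, hzy⟩
      exact ⟨⟨hp.1.1, hp.2 ⟨hs, hsz⟩, hp.1.2.trans hzy⟩, hzy, hp⟩

end SupClosed

/-- The Möbius function aggregate `η` satisfies `η s s = 1` on a sup-closed subset `T`,
and a recursion identical to that of the Möbius function of `T`. -/
theorem stmt_2 {P : Type*} [PartialOrder P] [Fintype P]
    (T : Set P)
    (hT : ∀ F : Set P, F ⊆ T → F.Nonempty → ∃ s ∈ T, IsLUB F s)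
    (μ : P → P → ℤ)
    (hμ₁ : ∀ x : P, μ x x = 1)
    (hμ₂ : ∀ x y : P, x < y →
      ∑ z ∈ Finset.univ.filter (fun z => x ≤ z ∧ z ≤ y), μ z y = 0)
    (η : P → P → ℤ)
    (hη : ∀ s y : P, η s y =
      ∑ z ∈ Finset.univ.filter
        (fun z => z ≤ y ∧ s ∈ T ∧ s ≤ z ∧ ∀ t ∈ T, t ≤ z → t ≤ s), μ z y) :
    (∀ s ∈ T, η s s = 1) ∧
    ∀ s ∈ T, ∀ y : P, s < y →
      η s y = - ∑ p ∈ Finset.univ.filter (fun p => p ∈ T ∧ s < p ∧ p ≤ y), η p y := by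
  have hη_isGreatest : ∀ s y, η s y =
      ∑ z ∈ univ.filter (fun z => z ≤ y ∧ IsGreatest (T ∩ Set.Iic z) s), μ z y := by
    intro s y
    simp only [hη, isGreatest_inter_Iic_iff]
  refine ⟨fun s hs => by rw [hη_isGreatest, sum_filter_isGreatest_inter_Iic_self hs, hμ₁], ?_⟩
  intro s hs y hsy
  have hsum : ∑ p ∈ univ.filter (fun p => p ∈ T ∧ s ≤ p ∧ p ≤ y), η p y = 0 := by
    simp only [hη_isGreatest]
    rw [sum_sum_filter_isGreatest_inter_Iic hT hs, hμ₂ s y hsy]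
  rw [sum_filter_mem_le_eq_add_sum_filter_mem_lt hs hsy.le] at hsum
  exact eq_neg_of_add_eq_zero_left hsum
end

section
/- Let (P, ≤) be a finite partially ordered set, f : P → ℝ, g its zeta transform, and T ⊆ P a sup-closed subset with supp(f) ⊆ T. Then for every y ∈ P \ T: f(y) = 0; if the set {t ∈ T : t ≤ y} is nonempty, then it has a greatest element s and g(y) = g(s); and if {t ∈ T : t ≤ y} is empty, then g(y) = 0. -/
open Classical

/-! Every `x ≤ y` in the support of `f` lies in `T`, hence below the least upper bound `s` of
`{t ∈ T | t ≤ y}`, which is itself in `T` and below `y`; so the zeta sums at `y` and at `s` run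
over the same nonzero terms. -/

open Finset

theorem exists_isGreatest_inter_Iic_of_isLUB_mem {P : Type*} [PartialOrder P] {T : Set P}
    (hT : ∀ F : Set P, F ⊆ T → F.Nonempty → ∃ s ∈ T, IsLUB F s) {t y : P} (ht : t ∈ T)
    (hty : t ≤ y) : ∃ s, IsGreatest {x | x ∈ T ∧ x ≤ y} s := by
  obtain ⟨s, hsT, hlub⟩ := hT {x | x ∈ T ∧ x ≤ y} (fun _ hx => hx.1) ⟨t, ht, hty⟩
  exact ⟨s, ⟨hsT, hlub.2 fun _ hx => hx.2⟩, hlub.1⟩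

section ZetaSum

variable {P M : Type*} [PartialOrder P] [Fintype P] [AddCommMonoid M] {f : P → M} {T : Set P}

theorem sum_filter_le_eq_of_isGreatest (hsupp : ∀ x, f x ≠ 0 → x ∈ T) {y s : P}
    (hs : IsGreatest {x | x ∈ T ∧ x ≤ y} s) :
    ∑ x ∈ univ.filter (· ≤ y), f x = ∑ x ∈ univ.filter (· ≤ s), f x := by
  refine (sum_subset (fun x hx => ?_) fun x hxy hxs => ?_).symm
  · simp only [mem_filter, mem_univ, true_and] at hx ⊢
    exact hx.trans hs.1.2
  · simp only [mem_filter, mem_univ, true_and] at hxy hxs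
    by_contra hfx
    exact hxs (hs.2 ⟨hsupp x hfx, hxy⟩)

theorem sum_filter_le_eq_zero (hsupp : ∀ x, f x ≠ 0 → x ∈ T) {y : P}
    (hy : ∀ t ∈ T, ¬t ≤ y) : ∑ x ∈ univ.filter (· ≤ y), f x = 0 := by
  refine sum_eq_zero fun x hx => ?_
  by_contra hfx
  exact hy x (hsupp x hfx) (mem_filter.mp hx).2

end ZetaSum

/-- **Images of non focal points.** Outside a sup-closed superset `T` of the support
of `f`, `f` vanishes, and the zeta transform `g` takes the value of the greatest
element of `T` below (or `0` if there is none). -/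
theorem stmt_4 {P : Type*} [PartialOrder P] [Fintype P]
    (f g : P → ℝ)
    (hg : ∀ y : P, g y = ∑ x ∈ Finset.univ.filter (fun x => x ≤ y), f x)
    (T : Set P)
    (hT : ∀ F : Set P, F ⊆ T → F.Nonempty → ∃ s ∈ T, IsLUB F s)
    (hsupp : ∀ x : P, f x ≠ 0 → x ∈ T) :
    ∀ y : P, y ∉ T →
      f y = 0 ∧
      ((∃ t ∈ T, t ≤ y) →
        ∃ s ∈ T, s ≤ y ∧ (∀ t ∈ T, t ≤ y → t ≤ s) ∧ g y = g s) ∧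
      ((¬ ∃ t ∈ T, t ≤ y) → g y = 0) := by
  intro y hy
  refine ⟨not_not.mp (mt (hsupp y) hy), ?_, fun hnone => ?_⟩
  · rintro ⟨t, ht, hty⟩
    obtain ⟨s, hs⟩ := exists_isGreatest_inter_Iic_of_isLUB_mem hT ht hty
    refine ⟨s, hs.1.1, hs.1.2, fun t ht hty => hs.2 ⟨ht, hty⟩, ?_⟩
    rw [hg, hg, sum_filter_le_eq_of_isGreatest hsupp hs]
  · rw [hg]
    exact sum_filter_le_eq_zero hsupp fun t ht hty => hnone ⟨t, ht, hty⟩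
end

section
/- Let (P, ≤, ⊔) be a finite join-semilattice, f : P → ℝ, and g its zeta transform. Let 𝒢 be a partition of P such that for every part X ∈ 𝒢: g is constant on X, and every y ∈ P for which there exist a minimal element a of X with a ≤ y and a maximal element b of X with y ≤ b belongs to X. Let G be the set of all elements of P that are minimal in their part of 𝒢, let M = {y ∈ P : y is minimal in P and g(y) = 0}, and let Y = {x ⊔ a : x ∈ G \ M, a ∈ M}. Then ^∨(supp f) ⊆ ^∨(Y ∪ (G \ M)) ⊆ ^∨(G). -/
open Classical

/-- The join-closure of a subset of a join-semilattice: the set of all suprema of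
nonempty (finite) subsets. -/
def joinClosure {P : Type*} [SemilatticeSup P] (S : Set P) : Set P :=
  {y | ∃ F : Finset P, ∃ hF : F.Nonempty, ↑F ⊆ S ∧ y = F.sup' hF id}

/-!
Points of the support are reached by strong induction. For `x` in a block `X`, let `m` be the
join of the minimal elements of `X` below `x`. The convexity of `X` puts `[m, x]` inside `X`, so
`g` is constant there; grouping the zeta sum according to `z ↦ z ⊔ m` and inverting it on
`[m, x]` gives `∑_{z ⊔ m = x} f z = 0`, unless `m = x` and `g x ≠ 0`. In the first case
`x = z ⊔ m` for a smaller point `z` of the support, and joins with elements of `G` preserve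
`^∨(Y ∪ (G \ M))`: for `a ∈ M`, the join is absorbed as `c ⊔ a ∈ Y` with `c ∈ G \ M` below.
In the second case `x` is a join of minimal elements of `X`, none of them in `M` since `g ≠ 0`
on `X`.
-/

open Finset
open scoped SetFamily

section JoinClosure

variable {P : Type*} [SemilatticeSup P] {S T : Set P} {y : P}

theorem subset_joinClosure : S ⊆ joinClosure S := fun a ha =>
  ⟨{a}, singleton_nonempty a, by simpa using ha, by simp⟩

theorem sup_mem_joinClosure {a b : P} (ha : a ∈ joinClosure S) (hb : b ∈ joinClosure S) :
    a ⊔ b ∈ joinClosure S := by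
  obtain ⟨F, hF, hFS, rfl⟩ := ha
  obtain ⟨F', hF', hFS', rfl⟩ := hb
  refine ⟨F ∪ F', hF.mono subset_union_left, ?_, (sup'_union hF hF' id).symm⟩
  rw [coe_union]
  exact Set.union_subset hFS hFS'

@[elab_as_elim]
theorem joinClosure_induction {p : P → Prop} (mem : ∀ a ∈ S, p a)
    (sup : ∀ a b, p a → p b → p (a ⊔ b)) (hy : y ∈ joinClosure S) : p y := by
  obtain ⟨F, hF, hFS, rfl⟩ := hy
  exact sup'_induction hF id (fun a ha b hb => sup a b ha hb) fun a ha => mem a (hFS ha)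

theorem joinClosure_subset_joinClosure (h : S ⊆ joinClosure T) :
    joinClosure S ⊆ joinClosure T := fun _ =>
  joinClosure_induction h fun _ _ => sup_mem_joinClosure

theorem exists_le_of_mem_joinClosure (hy : y ∈ joinClosure S) : ∃ s ∈ S, s ≤ y :=
  joinClosure_induction (fun a ha => ⟨a, ha, le_rfl⟩)
    (fun _ _ ⟨s, hs, hsa⟩ _ => ⟨s, hs, hsa.trans le_sup_left⟩) hy

theorem sup_mem_of_mem_joinClosure {z : P} (hT : ∀ z ∈ T, ∀ a ∈ S, z ⊔ a ∈ T)
    (hz : z ∈ T) (hy : y ∈ joinClosure S) : z ⊔ y ∈ T := by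
  refine joinClosure_induction (p := fun y => ∀ z ∈ T, z ⊔ y ∈ T)
    (fun a ha z hz => hT z hz a ha) (fun a b ha hb z hz => ?_) hy z hz
  rw [← sup_assoc]
  exact hb _ (ha z hz)

theorem sup_mem_joinClosure_sups_union {s t : Set P} {z : P}
    (hz : z ∈ joinClosure (s ⊻ t ∪ s)) (hy : y ∈ joinClosure (s ∪ t)) :
    z ⊔ y ∈ joinClosure (s ⊻ t ∪ s) := by
  refine sup_mem_of_mem_joinClosure (fun z hz a ha => ?_) hz hy
  rcases ha with ha | ha
  · exact sup_mem_joinClosure hz (subset_joinClosure (Or.inr ha))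
  · obtain ⟨c, hc, hcz⟩ : ∃ c ∈ s, c ≤ z := by
      obtain ⟨w, hw, hwz⟩ := exists_le_of_mem_joinClosure hz
      rcases hw with ⟨c, hc, b, -, rfl⟩ | hw
      · exact ⟨c, hc, le_sup_left.trans hwz⟩
      · exact ⟨w, hw, hwz⟩
    rw [← sup_eq_left.2 hcz, sup_assoc]
    exact sup_mem_joinClosure hz
      (subset_joinClosure (Or.inl (Set.mem_sups.2 ⟨c, hc, a, ha, rfl⟩)))

theorem sups_union_subset_joinClosure {s t : Set P} : s ⊻ t ∪ s ⊆ joinClosure (s ∪ t) := by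
  rintro _ (⟨a, ha, b, hb, rfl⟩ | ha)
  · exact sup_mem_joinClosure (subset_joinClosure (Or.inl ha)) (subset_joinClosure (Or.inr hb))
  · exact subset_joinClosure (Or.inl ha)

end JoinClosure

theorem eq_zero_of_sum_Ioc_eq_zero {α M : Type*} [PartialOrder α] [LocallyFiniteOrder α]
    [WellFoundedLT α] [AddCommGroup M] {φ : α → M} {m x : α}
    (h : ∀ u ∈ Ioc m x, ∑ v ∈ Ioc m u, φ v = 0) {v : α} (hv : v ∈ Ioc m x) : φ v = 0 := by
  induction v using WellFoundedLT.induction with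
  | _ v ih =>
  obtain ⟨hmv, hvx⟩ := mem_Ioc.1 hv
  have hIoo : ∑ w ∈ Ioo m v, φ w = 0 := sum_eq_zero fun w hw =>
    ih w (mem_Ioo.1 hw).2 (mem_Ioc.2 ⟨(mem_Ioo.1 hw).1, (mem_Ioo.1 hw).2.le.trans hvx⟩)
  simpa [← Ioo_insert_right hmv, hIoo] using h v hv

theorem mem_of_minimal_le_of_le_mem {P : Type*} [Preorder P] [Finite P] {X : Set P}
    (hX : ∀ y : P, (∃ a ∈ X, (∀ a' ∈ X, ¬ a' < a) ∧ a ≤ y) →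
      (∃ b ∈ X, (∀ b' ∈ X, ¬ b < b') ∧ y ≤ b) → y ∈ X)
    {a y x : P} (ha : Minimal (· ∈ X) a) (hay : a ≤ y) (hyx : y ≤ x) (hx : x ∈ X) : y ∈ X := by
  obtain ⟨b, hxb, hb⟩ := Finite.exists_le_maximal (p := (· ∈ X)) hx
  exact hX y ⟨a, ha.prop, fun _ => ha.not_lt, hay⟩ ⟨b, hb.prop, fun _ => hb.not_gt, hyx.trans hxb⟩

section Zeta

variable {P M : Type*} [SemilatticeSup P] [Fintype P] [AddCommGroup M] {f g : P → M} {m x : P}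

theorem sum_le_eq_sum_Icc_sum_sup_eq [LocallyFiniteOrder P] {u : P} (hmu : m ≤ u) :
    ∑ z ∈ univ.filter (fun z => z ≤ u), f z =
      ∑ v ∈ Icc m u, ∑ z ∈ univ.filter (fun z => z ⊔ m = v), f z := by
  rw [← sum_fiberwise_of_maps_to (g := (· ⊔ m)) (t := Icc m u)
    fun z hz => mem_Icc.2 ⟨le_sup_right, sup_le (mem_filter.1 hz).2 hmu⟩]
  refine sum_congr rfl fun v hv => sum_congr (Finset.ext fun z => ?_) fun _ _ => rfl
  simp only [mem_filter, mem_univ, true_and, and_iff_right_iff_imp]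
  rintro rfl
  exact le_sup_left.trans (mem_Icc.1 hv).2

theorem sum_sup_eq_eq_zero (hg : ∀ y, g y = ∑ x ∈ univ.filter (fun x => x ≤ y), f x)
    (hmx : m < x) (hconst : ∀ u, m ≤ u → u ≤ x → g u = g m) :
    ∑ z ∈ univ.filter (fun z => z ⊔ m = x), f z = 0 := by
  let _ : LocallyFiniteOrder P := Fintype.toLocallyFiniteOrder
  have hIoc : ∀ u, m ≤ u →
      g u = g m + ∑ v ∈ Ioc m u, ∑ z ∈ univ.filter (fun z => z ⊔ m = v), f z := by
    intro u hmu
    rw [hg, hg, sum_le_eq_sum_Icc_sum_sup_eq hmu, sum_le_eq_sum_Icc_sum_sup_eq le_rfl,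
      Icc_eq_cons_Ioc hmu, sum_cons, Icc_self, sum_singleton]
  refine eq_zero_of_sum_Ioc_eq_zero
    (φ := fun v => ∑ z ∈ univ.filter (fun z => z ⊔ m = v), f z) (fun u hu => ?_)
    (right_mem_Ioc.2 hmx)
  obtain ⟨hmu, hux⟩ := mem_Ioc.1 hu
  simpa [hconst u hmu.le hux] using hIoc u hmu.le

theorem sum_sup_self_eq (hg : ∀ y, g y = ∑ x ∈ univ.filter (fun x => x ≤ y), f x) :
    ∑ z ∈ univ.filter (fun z => z ⊔ x = x), f z = g x := by
  simp only [hg, sup_eq_right]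

theorem exists_lt_sup_eq_of_sum_sup_eq_eq_zero (hmx : m ≤ x) (hfx : f x ≠ 0)
    (h : ∑ z ∈ univ.filter (fun z => z ⊔ m = x), f z = 0) :
    ∃ z < x, f z ≠ 0 ∧ z ⊔ m = x := by
  have hx : x ∈ univ.filter (fun z => z ⊔ m = x) := by simpa using hmx
  rw [← add_sum_erase _ _ hx] at h
  have hrest : ∑ z ∈ (univ.filter (fun z => z ⊔ m = x)).erase x, f z ≠ 0 := fun h' =>
    hfx (by rwa [h', add_zero] at h)
  obtain ⟨z, hz, hfz⟩ := exists_ne_zero_of_sum_ne_zero hrest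
  obtain ⟨hzx, hzm⟩ : z ≠ x ∧ z ⊔ m = x := by simpa using hz
  exact ⟨z, lt_of_le_of_ne (hzm ▸ le_sup_left) hzx, hfz, hzm⟩

theorem exists_lt_sup_eq_or_mem_joinClosure_minimal
    (hg : ∀ y, g y = ∑ x ∈ univ.filter (fun x => x ≤ y), f x)
    {X : Set P} (hXconst : ∀ u ∈ X, ∀ v ∈ X, g u = g v)
    (hXconv : ∀ y : P, (∃ a ∈ X, (∀ a' ∈ X, ¬ a' < a) ∧ a ≤ y) →
      (∃ b ∈ X, (∀ b' ∈ X, ¬ b < b') ∧ y ≤ b) → y ∈ X)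
    {x : P} (hx : x ∈ X) (hfx : f x ≠ 0) :
    (∃ z < x, f z ≠ 0 ∧ ∃ y ∈ joinClosure {a | Minimal (· ∈ X) a}, z ⊔ y = x) ∨
      (x ∈ joinClosure {a | Minimal (· ∈ X) a} ∧ g x ≠ 0) := by
  set A := univ.filter (fun a => Minimal (· ∈ X) a ∧ a ≤ x)
  obtain ⟨a₀, ha₀x, ha₀⟩ := Finite.exists_le_minimal (p := (· ∈ X)) hx
  have ha₀A : a₀ ∈ A := by simp [A, ha₀, ha₀x]
  set m := A.sup' ⟨a₀, ha₀A⟩ id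
  have hmJ : m ∈ joinClosure {a | Minimal (· ∈ X) a} :=
    ⟨A, _, fun a ha => (mem_filter.1 ha).2.1, rfl⟩
  have hmx : m ≤ x := sup'_le _ id fun a ha => (mem_filter.1 ha).2.2
  by_cases hzero : ∑ z ∈ univ.filter (fun z => z ⊔ m = x), f z = 0
  · obtain ⟨z, hzx, hfz, hz⟩ := exists_lt_sup_eq_of_sum_sup_eq_eq_zero hmx hfx hzero
    exact Or.inl ⟨z, hzx, hfz, m, hmJ, hz⟩
  have hmx' : m = x := by
    by_contra hne
    have hI : ∀ u, m ≤ u → u ≤ x → u ∈ X := fun u hmu hux =>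
      mem_of_minimal_le_of_le_mem hXconv ha₀ ((le_sup' id ha₀A).trans hmu) hux hx
    exact hzero (sum_sup_eq_eq_zero hg (hmx.lt_of_ne hne) fun u hmu hux =>
      hXconst u (hI u hmu hux) m (hI m le_rfl hmx))
  refine Or.inr ⟨hmx' ▸ hmJ, fun hgx => hzero ?_⟩
  rw [hmx', sum_sup_self_eq hg, hgx]

theorem mem_joinClosure_sups_union_of_ne_zero
    (hg : ∀ y, g y = ∑ x ∈ univ.filter (fun x => x ≤ y), f x) {𝒢 : Set (Set P)}
    (h𝒢cover : ⋃₀ 𝒢 = Set.univ) (h𝒢const : ∀ X ∈ 𝒢, ∀ u ∈ X, ∀ v ∈ X, g u = g v)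
    (h𝒢conv : ∀ X ∈ 𝒢, ∀ y : P, (∃ a ∈ X, (∀ a' ∈ X, ¬ a' < a) ∧ a ≤ y) →
      (∃ b ∈ X, (∀ b' ∈ X, ¬ b < b') ∧ y ≤ b) → y ∈ X)
    {s t : Set P} (hmin : ∀ X ∈ 𝒢, {a | Minimal (· ∈ X) a} ⊆ s ∪ t) (ht : ∀ a ∈ t, g a = 0)
    (hfx : f x ≠ 0) : x ∈ joinClosure (s ⊻ t ∪ s) := by
  induction x using WellFoundedLT.induction with
  | _ x ih =>
  obtain ⟨X, hX, hxX⟩ := Set.mem_sUnion.1 (h𝒢cover ▸ Set.mem_univ x)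
  rcases exists_lt_sup_eq_or_mem_joinClosure_minimal hg (h𝒢const X hX) (h𝒢conv X hX) hxX hfx
    with ⟨z, hzx, hfz, y, hy, rfl⟩ | ⟨hx, hgx⟩
  · exact sup_mem_joinClosure_sups_union (ih z hzx hfz)
      (joinClosure_subset_joinClosure ((hmin X hX).trans subset_joinClosure) hy)
  · refine joinClosure_subset_joinClosure (fun a ha => subset_joinClosure (Or.inr ?_)) hx
    refine (hmin X hX ha).resolve_right fun hat => hgx ?_
    rw [h𝒢const X hX x hxX a ha.prop]
    exact ht a hat

end Zeta

theorem stmt_5_general {P : Type*} [SemilatticeSup P] [Fintype P]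
    (f g : P → ℝ)
    (hg : ∀ y : P, g y = ∑ x ∈ Finset.univ.filter (fun x => x ≤ y), f x)
    (𝒢 : Set (Set P))
    (h𝒢cover : ⋃₀ 𝒢 = Set.univ)
    (h𝒢const : ∀ X ∈ 𝒢, ∀ x ∈ X, ∀ y ∈ X, g x = g y)
    (h𝒢conv : ∀ X ∈ 𝒢, ∀ y : P,
      (∃ a ∈ X, (∀ a' ∈ X, ¬ a' < a) ∧ a ≤ y) →
      (∃ b ∈ X, (∀ b' ∈ X, ¬ b < b') ∧ y ≤ b) → y ∈ X)
    (G M Y : Set P)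
    (hGdef : G = {x | ∃ X ∈ 𝒢, x ∈ X ∧ ∀ x' ∈ X, ¬ x' < x})
    (hMdef : M = {y | (∀ z : P, ¬ z < y) ∧ g y = 0})
    (hYdef : Y = {z | ∃ x ∈ G \ M, ∃ a ∈ M, z = x ⊔ a}) :
    joinClosure {x | f x ≠ 0} ⊆ joinClosure (Y ∪ (G \ M)) ∧
    joinClosure (Y ∪ (G \ M)) ⊆ joinClosure G := by
  have hminG : ∀ X ∈ 𝒢, {a | Minimal (· ∈ X) a} ⊆ G := fun X hX a ha =>
    hGdef ▸ ⟨X, hX, ha.prop, fun _ => ha.not_lt⟩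
  have hMG : M ⊆ G := fun a ha => by
    obtain ⟨X, hX, haX⟩ := Set.mem_sUnion.1 (h𝒢cover ▸ Set.mem_univ a)
    exact hGdef ▸ ⟨X, hX, haX, fun x' _ => (hMdef ▸ ha).1 x'⟩
  have hG : G = (G \ M) ∪ M := (Set.sdiff_union_of_subset hMG).symm
  have hY : Y = (G \ M) ⊻ M := by
    ext z
    simp only [hYdef, Set.mem_sups, eq_comm, Set.mem_ofPred_eq]
  refine ⟨joinClosure_subset_joinClosure fun x hfx => ?_, joinClosure_subset_joinClosure ?_⟩
  · rw [hY]
    exact mem_joinClosure_sups_union_of_ne_zero hg h𝒢cover h𝒢const h𝒢conv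
      (fun X hX => hG ▸ hminG X hX) (fun a ha => (hMdef ▸ ha).2) hfx
  · have hsups := sups_union_subset_joinClosure (s := G \ M) (t := M)
    rwa [← hG, ← hY] at hsups

/-- **Finding the focal points from an image partition of the zeta transform.** -/
theorem stmt_5 {P : Type*} [SemilatticeSup P] [Fintype P]
    (f g : P → ℝ)
    (hg : ∀ y : P, g y = ∑ x ∈ Finset.univ.filter (fun x => x ≤ y), f x)
    (𝒢 : Set (Set P))
    (h𝒢ne : ∀ X ∈ 𝒢, X.Nonempty)
    (h𝒢disj : ∀ X ∈ 𝒢, ∀ Y ∈ 𝒢, X ≠ Y → X ∩ Y = ∅)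
    (h𝒢cover : ⋃₀ 𝒢 = Set.univ)
    (h𝒢const : ∀ X ∈ 𝒢, ∀ x ∈ X, ∀ y ∈ X, g x = g y)
    (h𝒢conv : ∀ X ∈ 𝒢, ∀ y : P,
      (∃ a ∈ X, (∀ a' ∈ X, ¬ a' < a) ∧ a ≤ y) →
      (∃ b ∈ X, (∀ b' ∈ X, ¬ b < b') ∧ y ≤ b) → y ∈ X)
    (G M Y : Set P)
    (hGdef : G = {x | ∃ X ∈ 𝒢, x ∈ X ∧ ∀ x' ∈ X, ¬ x' < x})
    (hMdef : M = {y | (∀ z : P, ¬ z < y) ∧ g y = 0})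
    (hYdef : Y = {z | ∃ x ∈ G \ M, ∃ a ∈ M, z = x ⊔ a}) :
    joinClosure {x | f x ≠ 0} ⊆ joinClosure (Y ∪ (G \ M)) ∧
    joinClosure (Y ∪ (G \ M)) ⊆ joinClosure G :=
  stmt_5_general f g hg 𝒢 h𝒢cover h𝒢const h𝒢conv G M Y hGdef hMdef hYdef
end

section
/- Let (P, ≤, ⊔) be a finite join-semilattice, f : P → ℝ nonnegative, and g its zeta transform. Let 𝒢 be a partition of P such that for every part X ∈ 𝒢: g is constant on X, and every y ∈ P for which there exist a minimal element a of X with a ≤ y and a maximal element b of X with y ≤ b belongs to X. Let G be the set of all elements of P that are minimal in their part of 𝒢, and let M = {y ∈ P : y is minimal in P and g(y) = 0}. Then ^∨(supp f) ⊆ G \ M. -/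
/-!
Every element `y` of the join-closure of `supp f` lies above some `x` with `f x > 0`, and for
`a < y` some such `x` escapes the down-set of `a`. By nonnegativity of `f`, the zeta transform `g`
is therefore positive at `y` (so `y ∉ M`) and strictly larger at `y` than at every `a < y`. Since
`g` is constant on the part containing `y`, no element of that part lies below `y`, i.e. `y ∈ G`.
-/

open Classical

open Finset

section ZetaTransform

variable {P : Type*} [Preorder P] [Fintype P] {f : P → ℝ} {a x y : P}

theorem sum_filter_le_pos (hf : ∀ z, 0 ≤ f z) (hx : 0 < f x) (hxy : x ≤ y) :
    0 < ∑ z ∈ univ.filter (· ≤ y), f z :=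
  hx.trans_le <| single_le_sum (fun z _ => hf z) (by simpa using hxy)

theorem sum_filter_le_lt_sum_filter_le (hf : ∀ z, 0 ≤ f z) (hx : 0 < f x) (hay : a ≤ y)
    (hxy : x ≤ y) (hxa : ¬ x ≤ a) :
    ∑ z ∈ univ.filter (· ≤ a), f z < ∑ z ∈ univ.filter (· ≤ y), f z := by
  refine sum_lt_sum_of_subset (i := x) ?_ (by simpa using hxy) (by simpa using hxa) hx
    (fun z _ _ => hf z)
  intro z hz
  simp only [mem_filter, mem_univ, true_and] at hz ⊢
  exact hz.trans hay

end ZetaTransform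

section JoinClosure

variable {P : Type*} [SemilatticeSup P] {S : Set P} {a y : P}

theorem exists_mem_le_of_mem_joinClosure (hy : y ∈ joinClosure S) : ∃ x ∈ S, x ≤ y := by
  obtain ⟨F, ⟨x, hx⟩, hFS, rfl⟩ := hy
  exact ⟨x, hFS hx, le_sup' id hx⟩

theorem exists_mem_le_not_le_of_lt_of_mem_joinClosure (hy : y ∈ joinClosure S) (hay : a < y) :
    ∃ x ∈ S, x ≤ y ∧ ¬ x ≤ a := by
  obtain ⟨F, hF, hFS, rfl⟩ := hy
  obtain ⟨x, hx, hxa⟩ : ∃ x ∈ F, ¬ x ≤ a := by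
    simpa [sup'_le_iff] using hay.not_ge
  exact ⟨x, hFS hx, le_sup' id hx, hxa⟩

end JoinClosure

theorem stmt_6_general {P : Type*} [SemilatticeSup P] [Fintype P]
    (f g : P → ℝ)
    (hf : ∀ x : P, 0 ≤ f x)
    (hg : ∀ y : P, g y = ∑ x ∈ Finset.univ.filter (fun x => x ≤ y), f x)
    (𝒢 : Set (Set P))
    (h𝒢cover : ⋃₀ 𝒢 = Set.univ)
    (h𝒢const : ∀ X ∈ 𝒢, ∀ x ∈ X, ∀ y ∈ X, g x = g y)
    (G M : Set P)
    (hGdef : G = {x | ∃ X ∈ 𝒢, x ∈ X ∧ ∀ x' ∈ X, ¬ x' < x})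
    (hMdef : M = {y | (∀ z : P, ¬ z < y) ∧ g y = 0}) :
    joinClosure {x | f x ≠ 0} ⊆ G \ M := by
  intro y hy
  have hsupp : ∀ x ∈ {x | f x ≠ 0}, 0 < f x := fun x hx => (hf x).lt_of_ne' hx
  have hgy : 0 < g y := by
    obtain ⟨x, hx, hxy⟩ := exists_mem_le_of_mem_joinClosure hy
    exact hg y ▸ sum_filter_le_pos hf (hsupp x hx) hxy
  have hgt : ∀ a < y, g a < g y := fun a hay => by
    obtain ⟨x, hx, hxy, hxa⟩ := exists_mem_le_not_le_of_lt_of_mem_joinClosure hy hay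
    rw [hg, hg]
    exact sum_filter_le_lt_sum_filter_le hf (hsupp x hx) hay.le hxy hxa
  obtain ⟨X, hX, hyX⟩ : y ∈ ⋃₀ 𝒢 := h𝒢cover ▸ Set.mem_univ y
  subst hGdef hMdef
  exact ⟨⟨X, hX, hyX, fun a haX hay => (hgt a hay).ne (h𝒢const X hX a haX y hyX)⟩,
    fun hyM => hgy.ne' hyM.2⟩

/-- **Finding the focal points from an image partition when `f` is nonnegative.** -/
theorem stmt_6 {P : Type*} [SemilatticeSup P] [Fintype P]
    (f g : P → ℝ)
    (hf : ∀ x : P, 0 ≤ f x)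
    (hg : ∀ y : P, g y = ∑ x ∈ Finset.univ.filter (fun x => x ≤ y), f x)
    (𝒢 : Set (Set P))
    (h𝒢ne : ∀ X ∈ 𝒢, X.Nonempty)
    (h𝒢disj : ∀ X ∈ 𝒢, ∀ Y ∈ 𝒢, X ≠ Y → X ∩ Y = ∅)
    (h𝒢cover : ⋃₀ 𝒢 = Set.univ)
    (h𝒢const : ∀ X ∈ 𝒢, ∀ x ∈ X, ∀ y ∈ X, g x = g y)
    (h𝒢conv : ∀ X ∈ 𝒢, ∀ y : P,
      (∃ a ∈ X, (∀ a' ∈ X, ¬ a' < a) ∧ a ≤ y) →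
      (∃ b ∈ X, (∀ b' ∈ X, ¬ b < b') ∧ y ≤ b) → y ∈ X)
    (G M : Set P)
    (hGdef : G = {x | ∃ X ∈ 𝒢, x ∈ X ∧ ∀ x' ∈ X, ¬ x' < x})
    (hMdef : M = {y | (∀ z : P, ¬ z < y) ∧ g y = 0}) :
    joinClosure {x | f x ≠ 0} ⊆ G \ M :=
  stmt_6_general f g hf hg 𝒢 h𝒢cover h𝒢const G M hGdef hMdef
end

section
/- Let (P, ≤, ⊔) be a finite join-semilattice, f : P → ℝ, and h : P → ℝ with h(x) ≠ 0 for all x ∈ P, such that Σ_{x ≤ y} f(x) = Π_{x ≤ y} h(x) for every y ∈ P. Then ^∨(supp f) = ^∨({x ∈ P : h(x) ≠ 1} ∪ Min(P)), where Min(P) is the set of minimal elements of P. -/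
/-!
Write `F y = ∑_{x ≤ y} f x = ∏_{x ≤ y} h x`. A point `y` lies in `^∨A` exactly when it is the
join of the points of `A` below it. If some `y` with `f y ≠ 0` (resp. `h y ≠ 1`) were not such a
join, let `m < y` be the join of the relevant points below `y` (minimal elements supply one). By
well-founded induction, the gap `{x ≤ y | ¬ x ≤ m}` contains no other point of either support, so
comparing `F y` with `F m` forces `f y = 0` (resp. `h y = 1`, using `F m ≠ 0`). Minimal elements
belong to `supp f` since there `f m = h m ≠ 0`.
-/

open Classical

namespace joinClosure

variable {P : Type*} [SemilatticeSup P] {A B : Set P}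

theorem subset_self (A : Set P) : A ⊆ joinClosure A := fun a ha =>
  ⟨{a}, Finset.singleton_nonempty a, by simpa using ha, by simp⟩

variable [Finite P]

theorem mem_iff {y : P} :
    y ∈ joinClosure A ↔ (A ∩ Set.Iic y).Nonempty ∧ ∀ u, (∀ a ∈ A, a ≤ y → a ≤ u) → y ≤ u := by
  constructor
  · rintro ⟨F, hF, hFA, rfl⟩
    obtain ⟨a, ha⟩ := hF
    exact ⟨⟨a, hFA ha, Finset.le_sup' id ha⟩, fun u hu =>
      Finset.sup'_le _ _ fun b hb => hu b (hFA hb) (Finset.le_sup' id hb)⟩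
  · rintro ⟨hne, hlub⟩
    set F := (A ∩ Set.Iic y).toFinite.toFinset
    have hF : F.Nonempty := by simpa [F] using hne
    refine ⟨F, hF, fun a ha => by simp_all [F], le_antisymm ?_ ?_⟩
    · exact hlub _ fun a ha hay => Finset.le_sup' id (by simp [F, ha, hay])
    · exact Finset.sup'_le _ _ fun a ha => by simp_all [F]

theorem subset_of_subset (hAB : A ⊆ joinClosure B) : joinClosure A ⊆ joinClosure B := by
  intro x hx
  rw [mem_iff] at hx ⊢
  obtain ⟨⟨a, haA, hax⟩, hxlub⟩ := hx
  obtain ⟨⟨b, hbB, hba⟩, -⟩ := mem_iff.mp (hAB haA)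
  refine ⟨⟨b, hbB, hba.trans hax⟩, fun u hu => hxlub u fun a' ha'A ha'x => ?_⟩
  exact (mem_iff.mp (hAB ha'A)).2 u fun b hb hba' => hu b hb (hba'.trans ha'x)

-- The witness `m` is the join of the points of `A` below `y`.
theorem exists_lt_of_notMem {y : P} (hy : y ∉ joinClosure A) (hA : (A ∩ Set.Iic y).Nonempty) :
    ∃ m < y, ∀ x ∈ joinClosure A, x ≤ y → x ≤ m := by
  set F := (A ∩ Set.Iic y).toFinite.toFinset
  have hF : F.Nonempty := by simpa [F] using hA
  have hFy : F.sup' hF id ≤ y := Finset.sup'_le _ _ fun a ha => by simp_all [F]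
  have hAm : ∀ a ∈ A, a ≤ y → a ≤ F.sup' hF id := fun a ha hay =>
    Finset.le_sup' id (by simp [F, ha, hay])
  refine ⟨F.sup' hF id, hFy.lt_of_ne fun hmy => hy ?_, fun x hx hxy => ?_⟩
  · exact mem_iff.mpr ⟨hA, fun u hu => hmy ▸ Finset.sup'_le _ _ fun a ha => by simp_all [F]⟩
  · exact (mem_iff.mp hx).2 _ fun a ha hax => hAm a ha (hax.trans hxy)

-- For `y ∈ B \ ^∨A`, the `m` of `exists_lt_of_notMem` and induction on `y` make the gap
-- `{x ≤ y | ¬ x ≤ m}` avoid `A` and meet `B` only in `y`.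
theorem subset_of_forall_gap (hA : ∀ y, (A ∩ Set.Iic y).Nonempty)
    (hgap : ∀ y ∈ B, ∀ m < y, ¬ ∀ x ≤ y, ¬ x ≤ m → x ∉ A ∧ (x ∈ B → x = y)) :
    B ⊆ joinClosure A := by
  intro y
  induction y using WellFoundedLT.induction with
  | _ y ih =>
    intro hyB
    by_contra hy
    obtain ⟨m, hmy, hm⟩ := exists_lt_of_notMem hy (hA y)
    refine hgap y hyB m hmy fun x hxy hxm => ⟨fun hxA => hxm (hm x (subset_self A hxA) hxy),
      fun hxB => ?_⟩
    by_contra hxy'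
    exact hxm (hm x (ih x (hxy.lt_of_ne hxy') hxB) hxy)

end joinClosure

section Zeta

variable {P : Type*} [PartialOrder P] [Fintype P]

@[to_additive]
theorem prod_filter_le_eq_mul_prod_gap {M : Type*} [CommMonoid M] (g : P → M) {m y : P}
    (hmy : m ≤ y) :
    ∏ x ∈ Finset.univ.filter (· ≤ y), g x =
      (∏ x ∈ Finset.univ.filter (· ≤ m), g x) *
        ∏ x ∈ Finset.univ.filter (fun x => x ≤ y ∧ ¬ x ≤ m), g x := by
  rw [← Finset.prod_filter_mul_prod_filter_not (Finset.univ.filter (· ≤ y)) (· ≤ m),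
    Finset.filter_filter, Finset.filter_filter]
  congr 2
  ext x
  simpa using fun hxm : x ≤ m => hxm.trans hmy

theorem filter_le_eq_singleton_of_isMin {m : P} (hm : IsMin m) :
    Finset.univ.filter (· ≤ m) = {m} := by
  ext x
  simpa using ⟨fun hxm => le_antisymm hxm (hm hxm), fun hxm => hxm.le⟩

end Zeta

theorem inter_Iic_nonempty_of_isMin_subset {P : Type*} [Preorder P] [WellFoundedLT P] {A : Set P}
    (hA : {m | IsMin m} ⊆ A) (y : P) : (A ∩ Set.Iic y).Nonempty := by
  obtain ⟨m, hmy, hm⟩ := exists_minimal_le_of_wellFoundedLT (fun _ => True) y trivial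
  exact ⟨m, hA (minimal_true.mp hm), hmy⟩

section ZetaLink

variable {P : Type*} [SemilatticeSup P] [Fintype P] {f h : P → ℝ}

theorem apply_ne_zero_of_isMin (hne : ∀ x, h x ≠ 0)
    (hlink : ∀ y, ∑ x ∈ Finset.univ.filter (· ≤ y), f x = ∏ x ∈ Finset.univ.filter (· ≤ y), h x)
    {m : P} (hm : IsMin m) : f m ≠ 0 := by
  simpa [filter_le_eq_singleton_of_isMin hm] using (hlink m).trans_ne
    (Finset.prod_ne_zero_iff.mpr fun x _ => hne x)

-- On the gap `{x ≤ y | ¬ x ≤ m}`, `h = 1` and `f` vanishes off `y`, so the link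
-- identities at `y` and at `m` differ exactly by `f y`.
theorem support_subset_joinClosure
    (hlink : ∀ y, ∑ x ∈ Finset.univ.filter (· ≤ y), f x = ∏ x ∈ Finset.univ.filter (· ≤ y), h x) :
    {x | f x ≠ 0} ⊆ joinClosure ({x | h x ≠ 1} ∪ {m | IsMin m}) := by
  refine joinClosure.subset_of_forall_gap
    (inter_Iic_nonempty_of_isMin_subset Set.subset_union_right) fun y hfy m hmy hgap => hfy ?_
  have hsum : ∑ x ∈ Finset.univ.filter (fun x => x ≤ y ∧ ¬ x ≤ m), f x = f y := by
    refine Finset.sum_eq_single_of_mem y (by simpa using hmy.not_ge) fun x hx hxy => ?_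
    simp only [Finset.mem_filter, Finset.mem_univ, true_and] at hx
    by_contra hfx
    exact hxy ((hgap x hx.1 hx.2).2 hfx)
  have hprod : ∏ x ∈ Finset.univ.filter (fun x => x ≤ y ∧ ¬ x ≤ m), h x = 1 := by
    refine Finset.prod_eq_one fun x hx => ?_
    simp only [Finset.mem_filter, Finset.mem_univ, true_and] at hx
    by_contra hx1
    exact (hgap x hx.1 hx.2).1 (Or.inl hx1)
  have hy := hlink y
  rw [sum_filter_le_eq_add_sum_gap f hmy.le, prod_filter_le_eq_mul_prod_gap h hmy.le, hsum,
    hprod, mul_one, ← hlink m] at hy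
  linarith

-- On the gap `{x ≤ y | ¬ x ≤ m}`, `f = 0` and `h = 1` off `y`, so the link identities give
-- `H m = H m * h y` with `H m = ∏_{x ≤ m} h x ≠ 0`.
theorem ne_one_subset_joinClosure (hne : ∀ x, h x ≠ 0)
    (hlink : ∀ y, ∑ x ∈ Finset.univ.filter (· ≤ y), f x = ∏ x ∈ Finset.univ.filter (· ≤ y), h x) :
    {x | h x ≠ 1} ⊆ joinClosure {x | f x ≠ 0} := by
  refine joinClosure.subset_of_forall_gap (inter_Iic_nonempty_of_isMin_subset
    fun m hm => apply_ne_zero_of_isMin hne hlink hm) fun y hhy m hmy hgap => hhy ?_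
  have hsum : ∑ x ∈ Finset.univ.filter (fun x => x ≤ y ∧ ¬ x ≤ m), f x = 0 := by
    refine Finset.sum_eq_zero fun x hx => ?_
    simp only [Finset.mem_filter, Finset.mem_univ, true_and] at hx
    by_contra hfx
    exact (hgap x hx.1 hx.2).1 hfx
  have hprod : ∏ x ∈ Finset.univ.filter (fun x => x ≤ y ∧ ¬ x ≤ m), h x = h y := by
    refine Finset.prod_eq_single_of_mem y (by simpa using hmy.not_ge) fun x hx hxy => ?_
    simp only [Finset.mem_filter, Finset.mem_univ, true_and] at hx
    by_contra hx1
    exact hxy ((hgap x hx.1 hx.2).2 hx1)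
  have hFm : ∏ x ∈ Finset.univ.filter (· ≤ m), h x ≠ 0 :=
    Finset.prod_ne_zero_iff.mpr fun x _ => hne x
  have hy := hlink y
  rw [sum_filter_le_eq_add_sum_gap f hmy.le, prod_filter_le_eq_mul_prod_gap h hmy.le, hsum,
    hprod, add_zero, hlink m] at hy
  exact (mul_eq_left₀ hFm).mp hy.symm

end ZetaLink

/-- **Link between the focal points of `f` and of `h`**: if the additive zeta
transform of `f` equals the multiplicative zeta transform of a nowhere-zero `h`,
then `^∨(supp f) = ^∨({h ≠ 1} ∪ Min(P))`. -/
theorem stmt_9 {P : Type*} [SemilatticeSup P] [Fintype P]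
    (f h : P → ℝ)
    (hne : ∀ x : P, h x ≠ 0)
    (hlink : ∀ y : P,
      ∑ x ∈ Finset.univ.filter (fun x => x ≤ y), f x =
      ∏ x ∈ Finset.univ.filter (fun x => x ≤ y), h x) :
    joinClosure {x | f x ≠ 0} =
      joinClosure ({x | h x ≠ 1} ∪ {y | ∀ z : P, ¬ z < y}) := by
  simp only [← isMin_iff_forall_not_lt]
  refine (joinClosure.subset_of_subset (support_subset_joinClosure hlink)).antisymm
    (joinClosure.subset_of_subset (Set.union_subset (ne_one_subset_joinClosure hne hlink) ?_))
  exact fun m hm => joinClosure.subset_self _ (apply_ne_zero_of_isMin hne hlink hm)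
end

section
/- Let (P, ≤) be a finite partially ordered set, x ∈ P, and let f, f', h, h' : P → ℝ with h and h' nowhere zero, h'(z) = h(z) for every z ≠ x, and such that for all y ∈ P: Σ_{z ≤ y} f(z) = Π_{z ≤ y} h(z) and Σ_{z ≤ y} f'(z) = Π_{z ≤ y} h'(z). Write g(y) = Σ_{z ≤ y} f(z). Then for every y ∈ P with ¬(x ≤ y) one has f'(y) = f(y), and for every y ∈ P with x ≤ y one has f'(y) = f(y) + (h'(x)/h(x) − 1) · Σ_{s : x ≤ s ≤ y} g(s) · μ_{↑x}(s, y), where μ_{↑x} is the Möbius function of the subposet {p ∈ P : x ≤ p} with the order induced from P. -/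
/-!
Away from `↑x` the products defining `h` and `h'` agree, so the zeta transforms of `f` and `f'`
agree there, and hence so do `f` and `f'` themselves (induction, peeling off the top term).
On `↑x` the products differ by the factor `h' x / h x`, so `f' - f` vanishes off `↑x` and its
zeta transform over the poset `↑x` is `(h' x / h x - 1) * g`; Möbius inversion on `↑x` recovers
`f' - f`.
-/

open Classical Finset

theorem prod_eq_of_eq_off {ι M : Type*} [CommMonoid M] {h h' : ι → M} {x : ι} {s : Finset ι}
    (hh' : ∀ z, z ≠ x → h' z = h z) (hx : x ∉ s) :
    ∏ z ∈ s, h' z = ∏ z ∈ s, h z :=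
  prod_congr rfl fun _ hz => hh' _ (ne_of_mem_of_not_mem hz hx)

theorem mul_prod_eq_mul_prod_of_eq_off {ι M : Type*} [CommMonoid M] {h h' : ι → M} {x : ι}
    {s : Finset ι} (hh' : ∀ z, z ≠ x → h' z = h z) (hx : x ∈ s) :
    h x * ∏ z ∈ s, h' z = h' x * ∏ z ∈ s, h z := by
  rw [← mul_prod_erase s h' hx, ← mul_prod_erase s h hx,
    prod_eq_of_eq_off hh' (notMem_erase x s), mul_left_comm]

section

variable {P : Type*} [PartialOrder P] [Fintype P]

theorem sum_filter_le_eq_add_sum_filter_lt {M : Type*} [AddCommMonoid M] (F : P → M) (y : P) :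
    ∑ z with z ≤ y, F z = F y + ∑ z with z < y, F z := by
  have hinsert : univ.filter (· ≤ y) = insert y (univ.filter (· < y)) := by
    ext z
    simp [le_iff_eq_or_lt]
  rw [hinsert, sum_insert (by simp)]

theorem eqOn_of_sum_filter_le_eq {M : Type*} [AddCommGroup M] {f f' : P → M} {s : Set P}
    (hs : IsLowerSet s) (hzeta : ∀ y ∈ s, ∑ z with z ≤ y, f' z = ∑ z with z ≤ y, f z) :
    Set.EqOn f' f s := by
  intro y
  induction y using WellFoundedLT.induction with
  | ind y ih =>
    intro hy
    have hlt : ∑ z with z < y, f' z = ∑ z with z < y, f z :=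
      sum_congr rfl fun z hz => ih z (mem_filter.mp hz).2 (hs (mem_filter.mp hz).2.le hy)
    have hle := hzeta y hy
    rw [sum_filter_le_eq_add_sum_filter_lt, sum_filter_le_eq_add_sum_filter_lt, hlt] at hle
    exact add_right_cancel hle

variable {x : P}

theorem sum_filter_le_and_le_eq_sum_filter_le {M : Type*} [AddCommMonoid M] {d : P → M}
    (hd : ∀ z, ¬ x ≤ z → d z = 0) (s : P) :
    ∑ z with x ≤ z ∧ z ≤ s, d z = ∑ z with z ≤ s, d z := by
  refine sum_subset (fun z hz => mem_filter.mpr ⟨mem_univ z, (mem_filter.mp hz).2.2⟩)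
    fun z hz hz' => hd z fun hxz => hz' (mem_filter.mpr ⟨mem_univ z, hxz, (mem_filter.mp hz).2⟩)

variable {μ : P → P → ℤ}

theorem sum_moebius_filter_eq_ite (hμ₁ : ∀ s : P, x ≤ s → μ s s = 1)
    (hμ₂ : ∀ s y : P, x ≤ s → s < y → ∑ z with x ≤ z ∧ s ≤ z ∧ z ≤ y, μ z y = 0)
    {z y : P} (hxz : x ≤ z) (hzy : z ≤ y) :
    ∑ s with x ≤ s ∧ z ≤ s ∧ s ≤ y, μ s y = if z = y then 1 else 0 := by
  split_ifs with h
  · subst h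
    have hsingleton : ({s | x ≤ s ∧ z ≤ s ∧ s ≤ z} : Finset P) = {z} := by
      ext s
      simp only [mem_filter, mem_univ, true_and, mem_singleton]
      exact ⟨fun hs => le_antisymm hs.2.2 hs.2.1, by rintro rfl; exact ⟨hxz, le_rfl, le_rfl⟩⟩
    rw [hsingleton, sum_singleton, hμ₁ z hxz]
  · exact hμ₂ z y hxz (lt_of_le_of_ne hzy h)

theorem sum_sum_filter_mul_moebius {R : Type*} [Ring R] (hμ₁ : ∀ s : P, x ≤ s → μ s s = 1)
    (hμ₂ : ∀ s y : P, x ≤ s → s < y → ∑ z with x ≤ z ∧ s ≤ z ∧ z ≤ y, μ z y = 0)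
    (d : P → R) {y : P} (hy : x ≤ y) :
    ∑ s with x ≤ s ∧ s ≤ y, (∑ z with x ≤ z ∧ z ≤ s, d z) * (μ s y : R) = d y := by
  simp_rw [sum_mul]
  rw [sum_comm' (t' := {z | x ≤ z ∧ z ≤ y}) (s' := fun z => {s | x ≤ s ∧ z ≤ s ∧ s ≤ y})
    (fun s z => by
      simp only [mem_filter, mem_univ, true_and]
      exact ⟨fun ⟨⟨hxs, hsy⟩, hxz, hzs⟩ => ⟨⟨hxs, hzs, hsy⟩, hxz, hzs.trans hsy⟩,
        fun ⟨⟨hxs, hzs, hsy⟩, hxz, _⟩ => ⟨⟨hxs, hsy⟩, hxz, hzs⟩⟩)]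
  have hinner : ∀ z ∈ ({z | x ≤ z ∧ z ≤ y} : Finset P),
      ∑ s with x ≤ s ∧ z ≤ s ∧ s ≤ y, d z * (μ s y : R) = if z = y then d z else 0 := by
    intro z hz
    obtain ⟨hxz, hzy⟩ := (mem_filter.mp hz).2
    rw [← mul_sum, ← Int.cast_sum, sum_moebius_filter_eq_ite hμ₁ hμ₂ hxz hzy]
    split_ifs <;> simp
  rw [sum_congr rfl hinner, sum_ite_eq']
  simp [hy]

end

theorem stmt_11_general {P : Type*} [PartialOrder P] [Fintype P]
    (x : P) (f f' h h' g : P → ℝ)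
    (hne : ∀ z : P, h z ≠ 0)
    (hh' : ∀ z : P, z ≠ x → h' z = h z)
    (hfh : ∀ y : P, ∑ z ∈ Finset.univ.filter (fun z => z ≤ y), f z =
      ∏ z ∈ Finset.univ.filter (fun z => z ≤ y), h z)
    (hfh' : ∀ y : P, ∑ z ∈ Finset.univ.filter (fun z => z ≤ y), f' z =
      ∏ z ∈ Finset.univ.filter (fun z => z ≤ y), h' z)
    (hg : ∀ y : P, g y = ∑ z ∈ Finset.univ.filter (fun z => z ≤ y), f z)
    (μ : P → P → ℤ)
    (hμ₁ : ∀ s : P, x ≤ s → μ s s = 1)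
    (hμ₂ : ∀ s y : P, x ≤ s → s < y →
      ∑ z ∈ Finset.univ.filter (fun z => x ≤ z ∧ s ≤ z ∧ z ≤ y), μ z y = 0) :
    (∀ y : P, ¬ x ≤ y → f' y = f y) ∧
    (∀ y : P, x ≤ y → f' y = f y +
      (h' x / h x - 1) *
        ∑ s ∈ Finset.univ.filter (fun s => x ≤ s ∧ s ≤ y), g s * (μ s y : ℝ)) := by
  have hoff : Set.EqOn f' f {y | ¬ x ≤ y} :=
    eqOn_of_sum_filter_le_eq (fun _ _ hzy hy hxz => hy (hxz.trans hzy)) fun y hy => by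
      rw [hfh, hfh', prod_eq_of_eq_off hh' (by simpa using hy)]
  have hzeta : ∀ s, x ≤ s →
      ∑ z with x ≤ z ∧ z ≤ s, (f' z - f z) = (h' x / h x - 1) * g s := by
    intro s hs
    have hmul : h x * ∑ z with z ≤ s, f' z = h' x * ∑ z with z ≤ s, f z := by
      rw [hfh, hfh']
      exact mul_prod_eq_mul_prod_of_eq_off hh' (by simpa using hs)
    rw [sum_filter_le_and_le_eq_sum_filter_le (fun z hz => sub_eq_zero.mpr (hoff hz)),
      sum_sub_distrib, hg]
    field_simp [hne x]
    linear_combination hmul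
  refine ⟨hoff, fun y hy => ?_⟩
  have hinversion := sum_sum_filter_mul_moebius hμ₁ hμ₂ (fun z => f' z - f z) hy
  rw [sum_congr rfl fun s hs => by rw [hzeta s (mem_filter.mp hs).2.1, mul_assoc],
    ← mul_sum] at hinversion
  linarith

/-- **Information flow from `h` to `f`** (Möbius transform of the common zeta
transform), where `μ` is the Möbius function of the upper closure `↑x`. -/
theorem stmt_11 {P : Type*} [PartialOrder P] [Fintype P]
    (x : P) (f f' h h' g : P → ℝ)
    (hne : ∀ z : P, h z ≠ 0) (hne' : ∀ z : P, h' z ≠ 0)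
    (hh' : ∀ z : P, z ≠ x → h' z = h z)
    (hfh : ∀ y : P, ∑ z ∈ Finset.univ.filter (fun z => z ≤ y), f z =
      ∏ z ∈ Finset.univ.filter (fun z => z ≤ y), h z)
    (hfh' : ∀ y : P, ∑ z ∈ Finset.univ.filter (fun z => z ≤ y), f' z =
      ∏ z ∈ Finset.univ.filter (fun z => z ≤ y), h' z)
    (hg : ∀ y : P, g y = ∑ z ∈ Finset.univ.filter (fun z => z ≤ y), f z)
    (μ : P → P → ℤ)
    (hμ₁ : ∀ s : P, x ≤ s → μ s s = 1)
    (hμ₂ : ∀ s y : P, x ≤ s → s < y →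
      ∑ z ∈ Finset.univ.filter (fun z => x ≤ z ∧ s ≤ z ∧ z ≤ y), μ z y = 0) :
    (∀ y : P, ¬ x ≤ y → f' y = f y) ∧
    (∀ y : P, x ≤ y → f' y = f y +
      (h' x / h x - 1) *
        ∑ s ∈ Finset.univ.filter (fun s => x ≤ s ∧ s ≤ y), g s * (μ s y : ℝ)) :=
  stmt_11_general x f f' h h' g hne hh' hfh hfh' hg μ hμ₁ hμ₂
end

section
/- Let Ω be a finite set, C a subset of Ω with C ≠ Ω, and m : 2^Ω → ℝ nonnegative with Σ_{x ⊆ Ω} m(x) = 1, m(x) = 0 for every x ⊄ C (i.e. supp(m) ⊆ 2^C), and m(C) > 0. Define m' : 2^Ω → ℝ by m'(C) = 0, m'(Ω) = m(C), and m'(x) = m(x) for all other x. Let q and q' be the commonality functions of m and m' respectively. Then q(C) = q'(Ω), and for every y ⊊ C one has Π_{y ⊆ B ⊆ C} q(B)^{(−1)^{|B|−|y|+1}} = Π_{y ⊆ B ⊆ Ω} q'(B)^{(−1)^{|B|−|y|+1}} (integer exponents; all bases are nonzero since q(B) ≥ m(C) > 0 for B ⊆ C and q'(B) ≥ m'(Ω)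 = m(C) > 0 for all B ⊆ Ω). -/
/-!
Moving the mass of `C` to `Ω` leaves the commonality of every `B ⊆ C` unchanged (both `C`
and `Ω` contain `B`), while every `B ⊄ C` gets commonality `m(C)` from `Ω` alone. The extra
factors on the right are therefore powers of the constant `m(C)`, whose exponents add up to
the alternating sums over the intervals `[y, Ω]` and `[y, C]`, both zero as `y ⊊ C ⊊ Ω`.
-/

open Finset

theorem Finset.prod_zpow_eq_zpow_sum₀ {ι G : Type*} [CommGroupWithZero G] {a : G} (ha : a ≠ 0)
    (s : Finset ι) (f : ι → ℤ) : ∏ i ∈ s, a ^ f i = a ^ ∑ i ∈ s, f i := by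
  induction s using Finset.cons_induction with
  | empty => simp
  | cons i s hi ih => rw [prod_cons, sum_cons, zpow_add₀ ha, ih]

section Interval

variable {α : Type*} [DecidableEq α] {s t : Finset α}

theorem Finset.sum_Icc_neg_one_pow_card_sub (h : s ⊂ t) :
    ∑ u ∈ Icc s t, (-1 : ℤ) ^ (#u - #s) = 0 := by
  have hdisj : ∀ v ∈ (t \ s).powerset, Disjoint s v := fun v hv =>
    disjoint_of_subset_right (mem_powerset.1 hv) disjoint_sdiff
  rw [Icc_eq_image_powerset h.subset, sum_image fun v hv w hw hvw => by
    rw [← union_sdiff_cancel_left (hdisj v hv), hvw, union_sdiff_cancel_left (hdisj w hw)]]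
  calc ∑ v ∈ (t \ s).powerset, (-1 : ℤ) ^ (#(s ∪ v) - #s)
      = ∑ v ∈ (t \ s).powerset, (-1 : ℤ) ^ #v := sum_congr rfl fun v hv => by
        rw [card_union_of_disjoint (hdisj v hv), Nat.add_sub_cancel_left]
    _ = 0 := sum_powerset_neg_one_pow_card_of_nonempty (sdiff_nonempty.2 h.not_subset)

theorem Finset.prod_Icc_zpow_neg_one_pow_eq_one {G : Type*} [CommGroupWithZero G] {a : G}
    (ha : a ≠ 0) (h : s ⊂ t) : ∏ u ∈ Icc s t, a ^ ((-1 : ℤ) ^ (#u - #s + 1)) = 1 := by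
  simp only [prod_zpow_eq_zpow_sum₀ ha, pow_succ, ← sum_mul, sum_Icc_neg_one_pow_card_sub h,
    zero_mul, zpow_zero]

end Interval

section Commonality

variable {Ω R : Type*} [Fintype Ω] [DecidableEq Ω]

def commonality [AddCommMonoid R] (m : Finset Ω → R) (y : Finset Ω) : R :=
  ∑ x ∈ univ.filter (fun x => y ⊆ x), m x

theorem commonality_eq_of_forall_ne [AddCommMonoid R] {m : Finset Ω → R} {A B : Finset Ω}
    (hBA : B ⊆ A) (h : ∀ x, B ⊆ x → x ≠ A → m x = 0) : commonality m B = m A :=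
  sum_eq_single_of_mem A (by simpa using hBA) fun x hx hxA => h x (by simpa using hx) hxA

theorem commonality_eq_of_transfer [AddCommGroup R] {m m' : Finset Ω → R} {B C D : Finset Ω}
    (hCD : C ≠ D) (hm' : ∀ x, x ≠ C → x ≠ D → m' x = m x) (hmass : m' C + m' D = m C + m D)
    (hBC : B ⊆ C) (hBD : B ⊆ D) : commonality m' B = commonality m B := by
  rw [← sub_eq_zero, commonality, commonality, ← sum_sub_distrib,
    sum_eq_add_of_mem C D (by simpa using hBC) (by simpa using hBD) hCD
      fun x _ hx => sub_eq_zero.2 (hm' x hx.1 hx.2),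
    sub_add_sub_comm, hmass, sub_self]

end Commonality

theorem stmt_12_general {Ω : Type*} [Fintype Ω] [DecidableEq Ω]
    (C : Finset Ω) (hC : C ≠ Finset.univ)
    (m m' : Finset Ω → ℝ)
    (hmsupp : ∀ x : Finset Ω, ¬ x ⊆ C → m x = 0)
    (hmC : 0 < m C)
    (hm'C : m' C = 0)
    (hm'univ : m' Finset.univ = m C)
    (hm' : ∀ x : Finset Ω, x ≠ C → x ≠ Finset.univ → m' x = m x)
    (q q' : Finset Ω → ℝ)
    (hq : ∀ y : Finset Ω, q y = ∑ x ∈ Finset.univ.filter (fun x => y ⊆ x), m x)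
    (hq' : ∀ y : Finset Ω, q' y = ∑ x ∈ Finset.univ.filter (fun x => y ⊆ x), m' x) :
    q C = q' Finset.univ ∧
    ∀ y : Finset Ω, y ⊂ C →
      (∏ B ∈ Finset.univ.filter (fun B => y ⊆ B ∧ B ⊆ C),
        q B ^ ((-1 : ℤ) ^ (B.card - y.card + 1))) =
      ∏ B ∈ Finset.univ.filter (fun B => y ⊆ B),
        q' B ^ ((-1 : ℤ) ^ (B.card - y.card + 1)) := by
  obtain rfl : q = commonality m := funext hq
  obtain rfl : q' = commonality m' := funext hq'
  have huniv : ¬ univ ⊆ C := fun h => hC (univ_subset_iff.1 h)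
  have hq'_of_subset : ∀ B ⊆ C, commonality m' B = commonality m B := fun B hB =>
    commonality_eq_of_transfer hC hm'
      (by rw [hm'C, hm'univ, hmsupp univ huniv, zero_add, add_zero]) hB (subset_univ B)
  have hq'_of_not_subset : ∀ B, ¬ B ⊆ C → commonality m' B = m C := fun B hB => by
    refine hm'univ ▸ commonality_eq_of_forall_ne (subset_univ B) fun x hBx hx => ?_
    rw [hm' x (by rintro rfl; exact hB hBx) hx]
    exact hmsupp x fun hxC => hB (hBx.trans hxC)
  have hq_C : commonality m C = m C := commonality_eq_of_forall_ne subset_rfl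
    fun x hCx hx => hmsupp x fun hxC => hx (hxC.antisymm hCx)
  refine ⟨by rw [hq_C, hq'_of_not_subset univ huniv], fun y hy => ?_⟩
  have hIcc : univ.filter (fun B => y ⊆ B ∧ B ⊆ C) = Icc y C := by ext; simp
  have hIci : univ.filter (fun B => y ⊆ B) = Icc y univ := by ext; simp
  have hIcc_subset : Icc y C ⊆ Icc y univ := Icc_subset_Icc_right (subset_univ C)
  have hsdiff : ∏ B ∈ Icc y univ \ Icc y C, m C ^ ((-1 : ℤ) ^ (#B - #y + 1)) = 1 := by
    have := prod_sdiff (f := fun B => m C ^ ((-1 : ℤ) ^ (#B - #y + 1))) hIcc_subset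
    rwa [prod_Icc_zpow_neg_one_pow_eq_one hmC.ne' hy, mul_one,
      prod_Icc_zpow_neg_one_pow_eq_one hmC.ne' (hy.trans_subset (subset_univ C))] at this
  rw [hIcc, hIci, ← prod_sdiff hIcc_subset, eq_comm,
    prod_congr rfl fun B hB => by rw [hq'_of_not_subset B (by simp_all)], hsdiff, one_mul]
  exact prod_congr rfl fun B hB => by rw [hq'_of_subset B (mem_Icc.1 hB).2]

/-- **Discounting to `Ω` or to `C` gives the same decomposition weights.** -/
theorem stmt_12 {Ω : Type*} [Fintype Ω] [DecidableEq Ω]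
    (C : Finset Ω) (hC : C ≠ Finset.univ)
    (m m' : Finset Ω → ℝ)
    (hm0 : ∀ x : Finset Ω, 0 ≤ m x)
    (hm1 : ∑ x : Finset Ω, m x = 1)
    (hmsupp : ∀ x : Finset Ω, ¬ x ⊆ C → m x = 0)
    (hmC : 0 < m C)
    (hm'C : m' C = 0)
    (hm'univ : m' Finset.univ = m C)
    (hm' : ∀ x : Finset Ω, x ≠ C → x ≠ Finset.univ → m' x = m x)
    (q q' : Finset Ω → ℝ)
    (hq : ∀ y : Finset Ω, q y = ∑ x ∈ Finset.univ.filter (fun x => y ⊆ x), m x)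
    (hq' : ∀ y : Finset Ω, q' y = ∑ x ∈ Finset.univ.filter (fun x => y ⊆ x), m' x) :
    q C = q' Finset.univ ∧
    ∀ y : Finset Ω, y ⊂ C →
      (∏ B ∈ Finset.univ.filter (fun B => y ⊆ B ∧ B ⊆ C),
        q B ^ ((-1 : ℤ) ^ (B.card - y.card + 1))) =
      ∏ B ∈ Finset.univ.filter (fun B => y ⊆ B),
        q' B ^ ((-1 : ℤ) ^ (B.card - y.card + 1)) :=
  stmt_12_general C hC m m' hmsupp hmC hm'C hm'univ hm' q q' hq hq'
end

section
/- Let Ω be a finite set, q : 2^Ω → ℝ, x ⊆ Ω, and c ∈ ℝ. Define q' : 2^Ω → ℝ by q'(y) = q(y) if y ⊆ x and q'(y) = c · q(y) otherwise. Let m(y) = Σ_{z ⊇ y} (−1)^{|z|−|y|} q(z), m'(y) = Σ_{z ⊇ y} (−1)^{|z|−|y|} q'(z), and m_{↓x}(y) = Σ_{y ⊆ z ⊆ x} (−1)^{|z|−|y|} q(z). Then for every y ⊆ x one has m'(y) = c · m(y) + (1 − c) · m_{↓x}(y), and for every y ⊆ Ω with y ⊄ x one has m'(y) = c · m(y). 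-/
open Classical

open Finset in
theorem Finset.sum_ite_mul_eq {ι R : Type*} [CommRing R] (s : Finset ι) (p : ι → Prop)
    [DecidablePred p] (c : R) (g : ι → R) :
    ∑ i ∈ s, (if p i then g i else c * g i) = c * ∑ i ∈ s, g i + (1 - c) * ∑ i ∈ s with p i, g i := by
  rw [sum_filter, mul_sum, mul_sum, ← sum_add_distrib]
  refine sum_congr rfl fun i _ => ?_
  split_ifs <;> ring

/-- **Effect of rescaling the commonality function above `x` on the mass function.** -/
theorem stmt_13 {Ω : Type*} [Fintype Ω] [DecidableEq Ω]
    (q q' : Finset Ω → ℝ) (x : Finset Ω) (c : ℝ)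
    (hq' : ∀ y : Finset Ω, q' y = if y ⊆ x then q y else c * q y)
    (m m' mdx : Finset Ω → ℝ)
    (hm : ∀ y : Finset Ω, m y = ∑ z ∈ Finset.univ.filter (fun z => y ⊆ z),
      (-1 : ℝ) ^ (z.card - y.card) * q z)
    (hm' : ∀ y : Finset Ω, m' y = ∑ z ∈ Finset.univ.filter (fun z => y ⊆ z),
      (-1 : ℝ) ^ (z.card - y.card) * q' z)
    (hmdx : ∀ y : Finset Ω, mdx y = ∑ z ∈ Finset.univ.filter (fun z => y ⊆ z ∧ z ⊆ x),
      (-1 : ℝ) ^ (z.card - y.card) * q z) :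
    (∀ y : Finset Ω, y ⊆ x → m' y = c * m y + (1 - c) * mdx y) ∧
    (∀ y : Finset Ω, ¬ y ⊆ x → m' y = c * m y) := by
  have key : ∀ y, m' y = c * m y + (1 - c) * mdx y := by
    intro y
    rw [hm', hm, hmdx, ← Finset.filter_filter]
    simp_rw [hq', mul_ite, mul_left_comm _ c]
    exact Finset.sum_ite_mul_eq _ _ c _
  refine ⟨fun y _ => key y, fun y hy => ?_⟩
  have no_interval : Finset.univ.filter (fun z : Finset Ω => y ⊆ z ∧ z ⊆ x) = ∅ :=
    Finset.filter_false_of_mem fun z _ hz => hy (hz.1.trans hz.2)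
  rw [key, hmdx, no_interval, Finset.sum_empty, mul_zero, add_zero]
end

section
/- Let Ω be a finite set and m₁, m₂ : 2^Ω → ℝ with commonality functions q₁, q₂. Define the conjunctive combination m₁₂(y) = Σ_{(s₁,s₂) : s₁ ∩ s₂ = y} m₁(s₁) · m₂(s₂), the sum ranging over all pairs of subsets of Ω whose intersection is y. Let T ⊆ 2^Ω be closed under pairwise intersection and contain supp(m₁) ∪ supp(m₂). Then for every y ∈ T one has m₁₂(y) = Σ_{s ∈ T, s ⊇ y} q₁(s) · q₂(s) · μ_{(T,⊇)}(s, y), where μ_{(T,⊇)} is the Möbius function of T ordered by reverse inclusion, and m₁₂(y) = 0 for every y ∉ T. -/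
/-! The commonality function of `m₁₂` is `q₁ q₂`, because `s ⊆ x₁ ∩ x₂` iff `s ⊆ x₁` and `s ⊆ x₂`.
Since `T` is closed under intersection and carries the focal sets of `m₁` and `m₂`, the combination
`m₁₂` is supported in `T`, so `q₁ q₂ s` is a sum over the elements of `T` above `s`, and Möbius
inversion on `(T, ⊇)` recovers `m₁₂` from `q₁ q₂`. -/

open Classical Finset

section MoebiusInversion

variable {α R : Type*} [Fintype α] [PartialOrder α] [DecidableLE α] [CommRing R]
  {T : Set α} {μ : α → α → ℤ}

theorem sum_moebius_eq_ite (hμ₁ : ∀ s ∈ T, μ s s = 1)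
    (hμ₂ : ∀ s ∈ T, ∀ y ∈ T, y < s →
      ∑ z ∈ univ.filter (fun z => z ∈ T ∧ y ≤ z ∧ z ≤ s), μ z y = 0)
    {y t : α} (hy : y ∈ T) (ht : t ∈ T) (hyt : y ≤ t) :
    ∑ z ∈ univ.filter (fun z => z ∈ T ∧ y ≤ z ∧ z ≤ t), (μ z y : R) = if t = y then 1 else 0 := by
  rw [← Int.cast_sum]
  obtain rfl | hlt := eq_or_lt_of_le hyt
  · have hsingle : univ.filter (fun z => z ∈ T ∧ y ≤ z ∧ z ≤ y) = {y} := by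
      ext z
      simp only [mem_filter, mem_univ, true_and, mem_singleton]
      exact ⟨fun h => le_antisymm h.2.2 h.2.1, by rintro rfl; exact ⟨hy, le_rfl, le_rfl⟩⟩
    simp [hsingle, hμ₁ y hy]
  · rw [hμ₂ t ht y hy hlt, if_neg hlt.ne', Int.cast_zero]

theorem moebius_inversion_on_subset (hμ₁ : ∀ s ∈ T, μ s s = 1)
    (hμ₂ : ∀ s ∈ T, ∀ y ∈ T, y < s →
      ∑ z ∈ univ.filter (fun z => z ∈ T ∧ y ≤ z ∧ z ≤ s), μ z y = 0)
    (f : α → R) {y : α} (hy : y ∈ T) :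
    ∑ s ∈ univ.filter (fun s => s ∈ T ∧ y ≤ s),
      (∑ t ∈ univ.filter (fun t => t ∈ T ∧ s ≤ t), f t) * μ s y = f y := by
  simp_rw [sum_mul]
  rw [sum_comm' (t' := univ.filter (fun t => t ∈ T ∧ y ≤ t))
    (s' := fun t => univ.filter (fun s => s ∈ T ∧ y ≤ s ∧ s ≤ t))
    (fun s t => by
      simp only [mem_filter, mem_univ, true_and]
      exact ⟨fun ⟨⟨hs, hys⟩, ht, hst⟩ => ⟨⟨hs, hys, hst⟩, ht, hys.trans hst⟩,
        fun ⟨⟨hs, hys, hst⟩, ht, _⟩ => ⟨⟨hs, hys⟩, ht, hst⟩⟩)]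
  calc ∑ t ∈ univ.filter (fun t => t ∈ T ∧ y ≤ t),
        ∑ s ∈ univ.filter (fun s => s ∈ T ∧ y ≤ s ∧ s ≤ t), f t * μ s y
      = ∑ t ∈ univ.filter (fun t => t ∈ T ∧ y ≤ t), if t = y then f t else 0 := by
        refine sum_congr rfl fun t ht => ?_
        rw [mem_filter] at ht
        rw [← mul_sum, sum_moebius_eq_ite hμ₁ hμ₂ hy ht.2.1 ht.2.2, mul_ite, mul_one,
          mul_zero]
    _ = f y := by simp [hy]

end MoebiusInversion

section ConjunctiveCombination

variable {Ω R : Type*} [Fintype Ω] [DecidableEq Ω] [CommSemiring R]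

def conjunctiveCombination (m₁ m₂ : Finset Ω → R) (y : Finset Ω) : R :=
  ∑ p ∈ univ.filter (fun p : Finset Ω × Finset Ω => p.1 ∩ p.2 = y), m₁ p.1 * m₂ p.2

theorem conjunctiveCombination_eq_zero_of_notMem {m₁ m₂ : Finset Ω → R} {T : Set (Finset Ω)}
    (hTinter : ∀ a ∈ T, ∀ b ∈ T, a ∩ b ∈ T) (hTsupp : ∀ x, m₁ x ≠ 0 ∨ m₂ x ≠ 0 → x ∈ T)
    {y : Finset Ω} (hy : y ∉ T) : conjunctiveCombination m₁ m₂ y = 0 := by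
  refine sum_eq_zero fun p hp => ?_
  rw [mem_filter] at hp
  by_contra h
  exact hy (hp.2 ▸ hTinter _ (hTsupp _ (.inl (left_ne_zero_of_mul h)))
    _ (hTsupp _ (.inr (right_ne_zero_of_mul h))))

theorem sum_superset_mul_sum_superset (m₁ m₂ : Finset Ω → R) (s : Finset Ω) :
    (∑ x ∈ univ.filter (s ⊆ ·), m₁ x) * (∑ x ∈ univ.filter (s ⊆ ·), m₂ x) =
      ∑ t ∈ univ.filter (s ⊆ ·), conjunctiveCombination m₁ m₂ t := by
  rw [sum_mul_sum, ← sum_product', ← sum_fiberwise_of_maps_to (g := fun p => p.1 ∩ p.2)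
    (t := univ.filter (s ⊆ ·)) (fun p hp => by simpa [subset_inter_iff] using hp)]
  refine sum_congr rfl fun t ht => sum_congr ?_ fun _ _ => rfl
  rw [mem_filter] at ht
  ext p
  simp only [mem_filter, mem_product, mem_univ, true_and, ← subset_inter_iff]
  exact ⟨And.right, fun h => ⟨h ▸ ht.2, h⟩⟩

end ConjunctiveCombination

/-- **Efficient conjunctive combination via focal points.** -/
theorem stmt_14 {Ω : Type*} [Fintype Ω] [DecidableEq Ω]
    (m₁ m₂ : Finset Ω → ℝ)
    (q₁ q₂ : Finset Ω → ℝ)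
    (hq₁ : ∀ y : Finset Ω, q₁ y = ∑ x ∈ Finset.univ.filter (fun x => y ⊆ x), m₁ x)
    (hq₂ : ∀ y : Finset Ω, q₂ y = ∑ x ∈ Finset.univ.filter (fun x => y ⊆ x), m₂ x)
    (m₁₂ : Finset Ω → ℝ)
    (hm₁₂ : ∀ y : Finset Ω, m₁₂ y = ∑ p ∈ Finset.univ.filter
      (fun p : Finset Ω × Finset Ω => p.1 ∩ p.2 = y), m₁ p.1 * m₂ p.2)
    (T : Set (Finset Ω))
    (hTinter : ∀ a ∈ T, ∀ b ∈ T, a ∩ b ∈ T)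
    (hTsupp : ∀ x : Finset Ω, m₁ x ≠ 0 ∨ m₂ x ≠ 0 → x ∈ T)
    (μ : Finset Ω → Finset Ω → ℤ)
    (hμ₁ : ∀ s ∈ T, μ s s = 1)
    (hμ₂ : ∀ s ∈ T, ∀ y ∈ T, y ⊂ s →
      ∑ z ∈ Finset.univ.filter (fun z => z ∈ T ∧ y ⊆ z ∧ z ⊆ s), μ z y = 0) :
    (∀ y ∈ T, m₁₂ y = ∑ s ∈ Finset.univ.filter (fun s => s ∈ T ∧ y ⊆ s),
      q₁ s * q₂ s * (μ s y : ℝ)) ∧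
    ∀ y : Finset Ω, y ∉ T → m₁₂ y = 0 := by
  have hm : m₁₂ = conjunctiveCombination m₁ m₂ := funext hm₁₂
  have hzero : ∀ y, y ∉ T → m₁₂ y = 0 := fun y hy =>
    hm ▸ conjunctiveCombination_eq_zero_of_notMem hTinter hTsupp hy
  have hprod (s : Finset Ω) :
      q₁ s * q₂ s = ∑ t ∈ univ.filter (fun t => t ∈ T ∧ s ⊆ t), m₁₂ t := by
    rw [hq₁, hq₂, sum_superset_mul_sum_superset, ← hm]
    refine (sum_subset (fun t ht => ?_) fun t ht htT => hzero t fun h => htT ?_).symm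
    · exact mem_filter.2 ⟨mem_univ t, (mem_filter.1 ht).2.2⟩
    · exact mem_filter.2 ⟨mem_univ t, h, (mem_filter.1 ht).2⟩
  refine ⟨fun y hy => ?_, hzero⟩
  simp_rw [hprod]
  exact (moebius_inversion_on_subset hμ₁ hμ₂ m₁₂ hy).symm
end

section
/- Let Ω be a finite set, C ⊆ Ω, and q : 2^Ω → ℝ with q(D) ≠ 0 for every D ⊆ C. Define the weight function w^C : 2^C → ℝ by w^C(A) = Π_{A ⊆ D ⊆ C} q(D)^{(−1)^{|D|−|A|+1}} (integer exponents). Then for every y ⊆ C one has Π_{y ⊆ B ⊆ C} w^C(B) = q(y)^{−1}; in particular, if q(∅) = 1 then Π_{B ⊆ C} w^C(B) = 1. -/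
/-!
Exchanging the two products makes the exponent of `q D` equal to `-∑_{y ⊆ B ⊆ D} (-1)^|D \ B|`,
minus the sum of the Möbius function of the Boolean lattice over `[y, D]`, which is `-1` for
`D = y` and `0` otherwise.
-/

open Classical

namespace Finset

theorem prod_Icc_Icc_comm {α M : Type*} [Preorder α] [LocallyFiniteOrder α] [CommMonoid M]
    (a b : α) (f : α → α → M) :
    ∏ x ∈ Icc a b, ∏ y ∈ Icc x b, f x y = ∏ y ∈ Icc a b, ∏ x ∈ Icc a y, f x y :=
  prod_comm' fun x y => by
    simp only [mem_Icc]
    exact ⟨fun ⟨⟨hax, _⟩, hxy, hyb⟩ => ⟨⟨hax, hxy⟩, hax.trans hxy, hyb⟩,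
      fun ⟨⟨hax, hxy⟩, _, hyb⟩ => ⟨⟨hax, hxy.trans hyb⟩, hxy, hyb⟩⟩

theorem prod_zpow_eq_zpow_sum₀_s15 {ι G₀ : Type*} [CommGroupWithZero G₀] (s : Finset ι) (f : ι → ℤ)
    {a : G₀} (ha : a ≠ 0) : ∏ i ∈ s, a ^ f i = a ^ ∑ i ∈ s, f i := by
  induction s using cons_induction with
  | empty => simp
  | cons i s hi ih => rw [prod_cons, sum_cons, zpow_add₀ ha, ih]

theorem sum_Icc_neg_one_pow_card_sdiff {α : Type*} [DecidableEq α] (s t : Finset α) :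
    ∑ u ∈ Icc s t, (-1 : ℤ) ^ #(t \ u) = if s = t then 1 else 0 := by
  by_cases hst : s ⊆ t
  · have hcompl : ∑ u ∈ Icc s t, (-1 : ℤ) ^ #(t \ u) = ∑ v ∈ (t \ s).powerset, (-1 : ℤ) ^ #v :=
      sum_nbij' (t \ ·) (t \ ·)
        (fun u hu => mem_powerset.2 (sdiff_subset_sdiff subset_rfl (mem_Icc.1 hu).1))
        (fun v hv => mem_Icc.2 ⟨fun x hx =>
          mem_sdiff.2 ⟨hst hx, fun hxv => (mem_sdiff.1 (mem_powerset.1 hv hxv)).2 hx⟩, sdiff_subset⟩)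
        (fun u hu => sdiff_sdiff_eq_self (mem_Icc.1 hu).2)
        (fun v hv => sdiff_sdiff_eq_self ((mem_powerset.1 hv).trans sdiff_subset))
        (fun _ _ => rfl)
    rw [hcompl, sum_powerset_neg_one_pow_card]
    exact if_congr (sdiff_eq_empty_iff_subset.trans ⟨hst.antisymm, fun h => h ▸ subset_rfl⟩) rfl rfl
  · rw [Icc_eq_empty (fun h => hst h), sum_empty, if_neg (fun h => hst h.le)]

theorem prod_Icc_prod_Icc_zpow_neg_one_pow {α G₀ : Type*} [DecidableEq α] [CommGroupWithZero G₀]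
    {s t : Finset α} (hst : s ⊆ t) (q : Finset α → G₀) (hq : ∀ u ∈ Icc s t, q u ≠ 0) :
    ∏ u ∈ Icc s t, ∏ v ∈ Icc u t, q v ^ ((-1 : ℤ) ^ (#(v \ u) + 1)) = (q s)⁻¹ := by
  calc ∏ u ∈ Icc s t, ∏ v ∈ Icc u t, q v ^ ((-1 : ℤ) ^ (#(v \ u) + 1))
      = ∏ v ∈ Icc s t, ∏ u ∈ Icc s v, q v ^ ((-1 : ℤ) ^ (#(v \ u) + 1)) :=
        prod_Icc_Icc_comm s t _
    _ = ∏ v ∈ Icc s t, (q v ^ ∑ u ∈ Icc s v, (-1 : ℤ) ^ #(v \ u))⁻¹ :=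
        prod_congr rfl fun v hv => by
          simp only [← prod_zpow_eq_zpow_sum₀_s15 _ _ (hq v hv), ← prod_inv_distrib, pow_succ,
            mul_neg_one, zpow_neg]
    _ = (q s)⁻¹ := by
        simp only [sum_Icc_neg_one_pow_card_sdiff]
        rw [prod_eq_single_of_mem s (mem_Icc.2 ⟨subset_rfl, hst⟩)
          fun v _ hvs => by rw [if_neg (Ne.symm hvs), zpow_zero, inv_one]]
        rw [if_pos rfl, zpow_one]

end Finset

open Finset

/-- **The generalized conjunctive weights multiplicatively invert to `q` on `2^C`.** -/
theorem stmt_15 {Ω : Type*} [Fintype Ω] [DecidableEq Ω]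
    (C : Finset Ω) (q : Finset Ω → ℝ)
    (hq : ∀ D : Finset Ω, D ⊆ C → q D ≠ 0)
    (w : Finset Ω → ℝ)
    (hw : ∀ A : Finset Ω, A ⊆ C → w A =
      ∏ D ∈ Finset.univ.filter (fun D => A ⊆ D ∧ D ⊆ C),
        q D ^ ((-1 : ℤ) ^ (D.card - A.card + 1))) :
    (∀ y : Finset Ω, y ⊆ C →
      (∏ B ∈ Finset.univ.filter (fun B => y ⊆ B ∧ B ⊆ C), w B) = (q y)⁻¹) ∧
    (q ∅ = 1 → (∏ B ∈ Finset.univ.filter (fun B => B ⊆ C), w B) = 1) := by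
  have hIcc (s t : Finset Ω) : univ.filter (fun u => s ⊆ u ∧ u ⊆ t) = Icc s t := by
    ext; simp
  have hw' (u : Finset Ω) (hu : u ⊆ C) :
      w u = ∏ v ∈ Icc u C, q v ^ ((-1 : ℤ) ^ (#(v \ u) + 1)) := by
    rw [hw u hu, hIcc]
    exact prod_congr rfl fun v hv => by rw [card_sdiff_of_subset (mem_Icc.1 hv).1]
  have key (y : Finset Ω) (hy : y ⊆ C) :
      ∏ B ∈ univ.filter (fun B => y ⊆ B ∧ B ⊆ C), w B = (q y)⁻¹ := by
    rw [hIcc, prod_congr rfl fun u hu => hw' u (mem_Icc.1 hu).2]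
    exact prod_Icc_prod_Icc_zpow_neg_one_pow hy q fun u hu => hq u (mem_Icc.1 hu).2
  refine ⟨key, fun h0 => ?_⟩
  simpa [h0] using key ∅ (empty_subset C)
end
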